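/- arXiv:2201.09229 — 12 statements merged into one kernel-verified Lean document; each statement's English description precedes it below -/
import Mathlib

section
/- Let Λ be a finite set, X a finite set, and let Q = {q_t^z : t ∈ Λ, z ∈ X^{Λ\{t}}} be a family of strictly positive one-point probability distributions on X satisfying the consistency conditions: q_t^{zy}(x) q_s^{zx}(v) q_t^{zv}(u) q_s^{zu}(y) = q_t^{zy}(u) q_s^{zu}(v) q_t^{zv}(x) q_s^{zx}(y) for all distinct t,s ∈ Λ, x,u,y,v ∈ X, z ∈ X^{Λ\{t,s}}. Then there exists a strictly positive probability distribution P on X^Λ whose one-point conditional probabilities coincide with Q, i.e. P(xz)/Σ_{u∈X} P(uz) = q_t^z(x) for all t, x ∈ X, z ∈ X^{Λ\{t}}. -/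
def cat {Λ X : Type*} [DecidableEq Λ] (t : Λ) (x : X) (z : {s : Λ // s ≠ t} → X) : Λ → X :=
  fun s => if h : s = t then x else z ⟨s, h⟩

def catT {Λ X : Type*} [DecidableEq Λ] (t s : Λ) (y : X) (z : {r : Λ // r ≠ t ∧ r ≠ s} → X) :
    {r : Λ // r ≠ t} → X :=
  fun r => if h : r.1 = s then y else z ⟨r.1, r.2, h⟩

def catS {Λ X : Type*} [DecidableEq Λ] (t s : Λ) (x : X) (z : {r : Λ // r ≠ t ∧ r ≠ s} → X) :
    {r : Λ // r ≠ s} → X :=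
  fun r => if h : r.1 = t then x else z ⟨r.1, h, r.2⟩

section aux

variable {Λ X : Type*} [DecidableEq Λ]

/-- environment of site t in configuration σ relative to reference ω and order e:
sites strictly before t take σ's value, the rest take ω's value. -/
def envA (e : Λ → ℕ) (ω : Λ → X) (t : Λ) (σ : Λ → X) : {s : Λ // s ≠ t} → X :=
  fun s => if e s.1 < e t then σ s.1 else ω s.1

/-- the interpolation between env of t and z: sites before t or with index ≤ j take z,
the rest take ω. -/
def zline (e : Λ → ℕ) (ω : Λ → X) (t : Λ) (z : {s : Λ // s ≠ t} → X) (j : ℕ) :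
    {s : Λ // s ≠ t} → X :=
  fun s => if e s.1 < e t ∨ e s.1 ≤ j then z s else ω s.1

def Tset [Fintype Λ] (e : Λ → ℕ) (t : Λ) (j : ℕ) : Finset {s : Λ // s ≠ t} :=
  Finset.univ.filter (fun i => e t < e i.1 ∧ e i.1 ≤ j)

lemma Ckey [Fintype Λ] (q : ∀ t : Λ, ({s : Λ // s ≠ t} → X) → X → ℝ)
    (hcons : ∀ t s : Λ, t ≠ s → ∀ x u y v : X, ∀ z : {r : Λ // r ≠ t ∧ r ≠ s} → X,
      q t (catT t s y z) x * q s (catS t s x z) v * q t (catT t s v z) u * q s (catS t s u z) y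
        = q t (catT t s y z) u * q s (catS t s u z) v * q t (catT t s v z) x
            * q s (catS t s x z) y)
    (hqpos : ∀ t z x, 0 < q t z x)
    (e : Λ → ℕ) (he : Function.Injective e) (ω : Λ → X)
    (t : Λ) (z : {s : Λ // s ≠ t} → X) (x u : X) (m : ℕ) :
    q t (zline e ω t z (e t)) x
      * (∏ i ∈ Tset e t (e t + m), q i.1 (envA e ω i.1 (cat t x z)) (z i))
      * (∏ i ∈ Tset e t (e t + m), q i.1 (envA e ω i.1 (cat t u z)) (ω i.1))
      * q t (zline e ω t z (e t + m)) u
    = q t (zline e ω t z (e t)) u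
      * (∏ i ∈ Tset e t (e t + m), q i.1 (envA e ω i.1 (cat t u z)) (z i))
      * (∏ i ∈ Tset e t (e t + m), q i.1 (envA e ω i.1 (cat t x z)) (ω i.1))
      * q t (zline e ω t z (e t + m)) x := by
  induction m with
  | zero =>
    have hT : Tset e t (e t + 0) = ∅ := by
      ext i
      simp only [Tset, Finset.mem_filter, Finset.mem_univ, true_and, Finset.notMem_empty,
        iff_false]
      omega
    rw [hT]
    simp only [Finset.prod_empty, Nat.add_zero]
    ring
  | succ m ih =>
    by_cases hex : ∃ i : {s : Λ // s ≠ t}, e i.1 = e t + m + 1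
    · obtain ⟨i, hi⟩ := hex
      have hti : e t < e i.1 := by omega
      have hiT : i ∉ Tset e t (e t + m) := by
        simp only [Tset, Finset.mem_filter, Finset.mem_univ, true_and]
        omega
      have hTins : Tset e t (e t + (m + 1)) = insert i (Tset e t (e t + m)) := by
        ext r
        simp only [Tset, Finset.mem_filter, Finset.mem_univ, true_and, Finset.mem_insert]
        constructor
        · rintro ⟨h1, h2⟩
          by_cases hr : e r.1 = e t + m + 1
          · left
            have : r.1 = i.1 := he (by omega)
            exact Subtype.ext this
          · right; constructor; exact h1; omega
        · rintro (rfl | ⟨h1, h2⟩)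
          · constructor; exact hti; omega
          · constructor; exact h1; omega
      -- the auxiliary two-site boundary condition
      set z' : {r : Λ // r ≠ t ∧ r ≠ i.1} → X :=
        fun r => if e r.1 < e i.1 then z ⟨r.1, r.2.1⟩ else ω r.1 with hz'
      have hne : t ≠ i.1 := fun h => i.2 h.symm
      have hzj : zline e ω t z (e t + m) = catT t i.1 (ω i.1) z' := by
        funext s
        simp only [zline, catT, hz']
        by_cases hs : s.1 = i.1
        · rw [dif_pos hs]
          have : e s.1 = e t + m + 1 := by rw [hs]; omega
          rw [if_neg (by omega)]
          rw [show s.1 = i.1 from hs]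
        · rw [dif_neg hs]
          have hsne : e s.1 ≠ e t + m + 1 := fun h => hs (he (by omega))
          by_cases hc : e s.1 < e t ∨ e s.1 ≤ e t + m
          · rw [if_pos hc, if_pos (by omega)]
          · rw [if_neg hc, if_neg (by omega)]
      have hzj1 : zline e ω t z (e t + (m + 1)) = catT t i.1 (z i) z' := by
        funext s
        simp only [zline, catT, hz']
        by_cases hs : s.1 = i.1
        · rw [dif_pos hs]
          have hle : e s.1 ≤ e t + (m + 1) := by rw [hs]; omega
          rw [if_pos (Or.inr hle)]
          congr 1
          exact Subtype.ext hs
        · rw [dif_neg hs]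
          have hsne : e s.1 ≠ e t + m + 1 := fun h => hs (he (by omega))
          by_cases hc : e s.1 < e t ∨ e s.1 ≤ e t + m
          · rw [if_pos (by omega), if_pos (by omega)]
          · rw [if_neg (by omega), if_neg (by omega)]
      have henv : ∀ v : X, envA e ω i.1 (cat t v z) = catS t i.1 v z' := by
        intro v
        funext r
        by_cases hr : r.1 = t
        · have hlt : e r.1 < e i.1 := by rw [hr]; omega
          simp only [envA, catS, cat, hz', dif_pos hr, if_pos hlt]
        · by_cases hc : e r.1 < e i.1
          · simp only [envA, catS, cat, hz', dif_neg hr, if_pos hc]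
          · simp only [envA, catS, cat, hz', dif_neg hr, if_neg hc]
      have step := hcons t i.1 hne x u (ω i.1) (z i) z'
      rw [← hzj, ← hzj1, ← henv x, ← henv u] at step
      rw [hTins, Finset.prod_insert hiT, Finset.prod_insert hiT,
        Finset.prod_insert hiT, Finset.prod_insert hiT]
      have hA : q t (zline e ω t z (e t + m)) x ≠ 0 := ne_of_gt (hqpos _ _ _)
      have hB : q t (zline e ω t z (e t + m)) u ≠ 0 := ne_of_gt (hqpos _ _ _)
      have H := congrArg₂ (· * ·) ih step
      refine mul_right_cancel₀ (mul_ne_zero hA hB) ?_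
      linear_combination H
    · push_neg at hex
      have hT : Tset e t (e t + (m + 1)) = Tset e t (e t + m) := by
        ext r
        simp only [Tset, Finset.mem_filter, Finset.mem_univ, true_and]
        have := hex r
        omega
      have hz : zline e ω t z (e t + (m + 1)) = zline e ω t z (e t + m) := by
        funext s
        simp only [zline]
        have := hex s
        by_cases hc : e s.1 < e t ∨ e s.1 ≤ e t + m
        · rw [if_pos hc, if_pos (by omega)]
        · rw [if_neg hc, if_neg (by omega)]
      rw [hT, hz]
      exact ih

set_option maxHeartbeats 1000000 in
lemma keyW [Fintype Λ] (q : ∀ t : Λ, ({s : Λ // s ≠ t} → X) → X → ℝ)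
    (hcons : ∀ t s : Λ, t ≠ s → ∀ x u y v : X, ∀ z : {r : Λ // r ≠ t ∧ r ≠ s} → X,
      q t (catT t s y z) x * q s (catS t s x z) v * q t (catT t s v z) u * q s (catS t s u z) y
        = q t (catT t s y z) u * q s (catS t s u z) v * q t (catT t s v z) x
            * q s (catS t s x z) y)
    (hqpos : ∀ t z x, 0 < q t z x)
    (e : Λ → ℕ) (he : Function.Injective e) (ω : Λ → X)
    (t : Λ) (z : {s : Λ // s ≠ t} → X) (x u : X) :
    (∏ s : Λ, q s (envA e ω s (cat t x z)) (cat t x z s) / q s (envA e ω s (cat t x z)) (ω s))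
      * q t z u
    = (∏ s : Λ, q s (envA e ω s (cat t u z)) (cat t u z s) / q s (envA e ω s (cat t u z)) (ω s))
      * q t z x := by
  classical
  have hM : ∀ s : Λ, e s ≤ Finset.univ.sup e := fun s => Finset.le_sup (Finset.mem_univ s)
  have hzM : zline e ω t z (e t + Finset.univ.sup e) = z := by
    funext s
    simp only [zline]
    rw [if_pos (Or.inr (by have := hM s.1; omega))]
  have hcatv : ∀ (v : X) (i : {s : Λ // s ≠ t}), cat t v z i.1 = z i := by
    intro v i
    simp only [cat, dif_neg i.2]
  have hcatt : ∀ v : X, cat t v z t = v := by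
    intro v
    simp [cat]
  have henvt : ∀ v : X, envA e ω t (cat t v z) = zline e ω t z (e t) := by
    intro v
    funext s
    have hne : e s.1 ≠ e t := fun h => s.2 (he h)
    simp only [envA, zline]
    by_cases hc : e s.1 < e t
    · rw [if_pos hc, if_pos (Or.inl hc), hcatv]
    · rw [if_neg hc, if_neg (by omega)]
  have hsplit : ∀ v : X,
      (∏ s : Λ, q s (envA e ω s (cat t v z)) (cat t v z s) / q s (envA e ω s (cat t v z)) (ω s))
      = (q t (zline e ω t z (e t)) v / q t (zline e ω t z (e t)) (ω t))
        * (∏ i ∈ Finset.univ.filter (fun i : {s : Λ // s ≠ t} => e i.1 < e t),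
            q i.1 (envA e ω i.1 (cat t v z)) (z i)
              / q i.1 (envA e ω i.1 (cat t v z)) (ω i.1))
        * ((∏ i ∈ Tset e t (e t + Finset.univ.sup e),
              q i.1 (envA e ω i.1 (cat t v z)) (z i))
            / (∏ i ∈ Tset e t (e t + Finset.univ.sup e),
              q i.1 (envA e ω i.1 (cat t v z)) (ω i.1))) := by
    intro v
    rw [Fintype.prod_eq_mul_prod_compl t]
    rw [Finset.prod_subtype (p := fun s => s ≠ t) ({t}ᶜ : Finset Λ) (fun s => by simp)
      (fun s => q s (envA e ω s (cat t v z)) (cat t v z s)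
        / q s (envA e ω s (cat t v z)) (ω s))]
    rw [← Finset.prod_filter_mul_prod_filter_not Finset.univ
      (fun i : {s : Λ // s ≠ t} => e i.1 < e t)]
    have hfn : Finset.univ.filter (fun i : {s : Λ // s ≠ t} => ¬ e i.1 < e t)
        = Tset e t (e t + Finset.univ.sup e) := by
      ext i
      have hne : e i.1 ≠ e t := fun h => i.2 (he h)
      have := hM i.1
      simp only [Finset.mem_filter, Finset.mem_univ, true_and, Tset]
      omega
    rw [hfn, henvt v, hcatt v]
    have hprodv : ∀ T : Finset {s : Λ // s ≠ t},
        (∏ i ∈ T, q i.1 (envA e ω i.1 (cat t v z)) (cat t v z i.1)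
          / q i.1 (envA e ω i.1 (cat t v z)) (ω i.1))
        = ∏ i ∈ T, q i.1 (envA e ω i.1 (cat t v z)) (z i)
          / q i.1 (envA e ω i.1 (cat t v z)) (ω i.1) := by
      intro T
      exact Finset.prod_congr rfl fun i _ => by rw [hcatv]
    rw [hprodv, hprodv]
    simp only [Finset.prod_div_distrib]
    ring
  have hBeq : (∏ i ∈ Finset.univ.filter (fun i : {s : Λ // s ≠ t} => e i.1 < e t),
        q i.1 (envA e ω i.1 (cat t x z)) (z i) / q i.1 (envA e ω i.1 (cat t x z)) (ω i.1))
      = ∏ i ∈ Finset.univ.filter (fun i : {s : Λ // s ≠ t} => e i.1 < e t),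
        q i.1 (envA e ω i.1 (cat t u z)) (z i) / q i.1 (envA e ω i.1 (cat t u z)) (ω i.1) := by
    refine Finset.prod_congr rfl fun i hi => ?_
    have hi' : e i.1 < e t := by
      simpa using (Finset.mem_filter.mp hi).2
    have henvi : envA e ω i.1 (cat t x z) = envA e ω i.1 (cat t u z) := by
      funext r
      simp only [envA]
      by_cases hc : e r.1 < e i.1
      · rw [if_pos hc, if_pos hc]
        have hrt : r.1 ≠ t := by
          intro h
          rw [h] at hc
          omega
        simp only [cat, dif_neg hrt]
      · rw [if_neg hc, if_neg hc]
    rw [henvi]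
  have C := Ckey q hcons hqpos e he ω t z x u (Finset.univ.sup e)
  rw [hzM] at C
  rw [hsplit x, hsplit u, hBeq]
  have hd : q t (zline e ω t z (e t)) (ω t) ≠ 0 := ne_of_gt (hqpos _ _ _)
  have hRx : (∏ i ∈ Tset e t (e t + Finset.univ.sup e),
      q i.1 (envA e ω i.1 (cat t x z)) (ω i.1)) ≠ 0 :=
    ne_of_gt (Finset.prod_pos fun i _ => hqpos _ _ _)
  have hRu : (∏ i ∈ Tset e t (e t + Finset.univ.sup e),
      q i.1 (envA e ω i.1 (cat t u z)) (ω i.1)) ≠ 0 :=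
    ne_of_gt (Finset.prod_pos fun i _ => hqpos _ _ _)
  have main : (q t (zline e ω t z (e t)) x
        * (∏ i ∈ Tset e t (e t + Finset.univ.sup e), q i.1 (envA e ω i.1 (cat t x z)) (z i))
        * q t z u)
        / (∏ i ∈ Tset e t (e t + Finset.univ.sup e), q i.1 (envA e ω i.1 (cat t x z)) (ω i.1))
      = (q t (zline e ω t z (e t)) u
        * (∏ i ∈ Tset e t (e t + Finset.univ.sup e), q i.1 (envA e ω i.1 (cat t u z)) (z i))
        * q t z x)
        / (∏ i ∈ Tset e t (e t + Finset.univ.sup e), q i.1 (envA e ω i.1 (cat t u z)) (ω i.1)) := by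
    rw [div_eq_div_iff hRx hRu]
    linear_combination C
  linear_combination ((∏ i ∈ Finset.univ.filter (fun i : {s : Λ // s ≠ t} => e i.1 < e t),
      q i.1 (envA e ω i.1 (cat t u z)) (z i) / q i.1 (envA e ω i.1 (cat t u z)) (ω i.1))
      / q t (zline e ω t z (e t)) (ω t)) * main

end aux

theorem stmt1 {Λ X : Type*} [DecidableEq Λ] [Fintype Λ] [Fintype X]
    [Nonempty Λ] [Nonempty X]
    (q : ∀ t : Λ, ({s : Λ // s ≠ t} → X) → X → ℝ)
    (hqpos : ∀ t z x, 0 < q t z x) (hqsum : ∀ t z, ∑ x : X, q t z x = 1)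
    (hcons : ∀ t s : Λ, t ≠ s → ∀ x u y v : X, ∀ z : {r : Λ // r ≠ t ∧ r ≠ s} → X,
      q t (catT t s y z) x * q s (catS t s x z) v * q t (catT t s v z) u * q s (catS t s u z) y
        = q t (catT t s y z) u * q s (catS t s u z) v * q t (catT t s v z) x
            * q s (catS t s x z) y) :
    ∃ P : (Λ → X) → ℝ, (∀ σ, 0 < P σ) ∧ ∑ σ, P σ = 1 ∧
      ∀ t z x, P (cat t x z) / ∑ u : X, P (cat t u z) = q t z x := by
  classical
  obtain ⟨x0⟩ := ‹Nonempty X›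
  set ω : Λ → X := fun _ => x0 with hω
  set e : Λ → ℕ := fun s => ((Fintype.equivFin Λ) s : ℕ) with hedef
  have he : Function.Injective e := by
    intro a b hab
    exact (Fintype.equivFin Λ).injective (Fin.ext hab)
  set W : (Λ → X) → ℝ := fun σ =>
    ∏ s : Λ, q s (envA e ω s σ) (σ s) / q s (envA e ω s σ) (ω s) with hW
  have hWpos : ∀ σ, 0 < W σ := fun σ =>
    Finset.prod_pos fun s _ => div_pos (hqpos _ _ _) (hqpos _ _ _)
  have key : ∀ (t : Λ) (z : {s : Λ // s ≠ t} → X) (x u : X),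
      W (cat t x z) * q t z u = W (cat t u z) * q t z x := by
    intro t z x u
    exact keyW q hcons hqpos e he ω t z x u
  set S : ℝ := ∑ σ : Λ → X, W σ with hS
  have hSpos : 0 < S := Finset.sum_pos (fun σ _ => hWpos σ) ⟨fun _ => x0, Finset.mem_univ _⟩
  refine ⟨fun σ => W σ / S, fun σ => div_pos (hWpos σ) hSpos, ?_, ?_⟩
  · rw [← Finset.sum_div, div_self (ne_of_gt hSpos)]
  · intro t z x
    have hs : 0 < ∑ u : X, W (cat t u z) :=
      Finset.sum_pos (fun v _ => hWpos _) ⟨x0, Finset.mem_univ _⟩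
    have h2 : (∑ u : X, W (cat t u z)) * q t z x = W (cat t x z) := by
      rw [Finset.sum_mul]
      have : ∀ v : X, W (cat t v z) * q t z x = W (cat t x z) * q t z v := fun v =>
        (key t z x v).symm
      simp_rw [this]
      rw [← Finset.mul_sum, hqsum, mul_one]
    have hsum : (∑ u : X, W (cat t u z) / S) = (∑ u : X, W (cat t u z)) / S := by
      rw [Finset.sum_div]
    rw [hsum]
    have hred : (W (cat t x z) / S) / ((∑ u : X, W (cat t u z)) / S)
        = W (cat t x z) / (∑ u : X, W (cat t u z)) := by
      rw [div_div_div_comm, div_self (ne_of_gt hSpos), div_one]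
    rw [show (fun σ => W σ / S) (cat t x z) = W (cat t x z) / S from rfl, hred,
      ← h2, mul_comm, mul_div_assoc, div_self (ne_of_gt hs), mul_one]
end

section
/- Let Λ be a finite set and X a finite set. If P and P' are two strictly positive probability distributions on X^Λ whose one-point conditional distributions coincide (i.e., for every t ∈ Λ, x ∈ X, z ∈ X^{Λ\{t}}, P(xz)/Σ_u P(uz) = P'(xz)/Σ_u P'(uz)), then P = P'. -/
theorem cat_restrict_eq_update {Λ X : Type*} [DecidableEq Λ] (σ : Λ → X) (t : Λ) (x : X) :
    cat t x (fun s : {s : Λ // s ≠ t} => σ s) = Function.update σ t x := by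
  funext s
  by_cases h : s = t
  · subst h; simp [cat]
  · simp [cat, h]

theorem mul_eq_mul_of_div_eq_div_of_div_eq_div {K : Type*} [Field K] {a a' b b' S S' : K}
    (hS : S ≠ 0) (hS' : S' ≠ 0) (ha : a / S = a' / S') (hb : b / S = b' / S') :
    a * b' = a' * b := by
  rw [div_eq_div_iff hS hS'] at ha hb
  apply mul_right_cancel₀ hS
  linear_combination b * ha - a * hb

theorem mul_eq_mul_of_mul_update_eq {Λ X K : Type*} [DecidableEq Λ] [Fintype Λ] [Field K]
    {f g : (Λ → X) → K} (hg : ∀ σ, g σ ≠ 0)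
    (hupd : ∀ σ t y, f σ * g (Function.update σ t y) = g σ * f (Function.update σ t y))
    (σ τ : Λ → X) : f σ * g τ = g σ * f τ := by
  suffices h : ∀ s : Finset Λ, ∀ σ τ : Λ → X, (∀ r ∉ s, σ r = τ r) → f σ * g τ = g σ * f τ from
    h Finset.univ σ τ (by simp)
  intro s
  induction s using Finset.induction_on with
  | empty =>
    intro σ τ hστ
    obtain rfl : σ = τ := funext fun r => hστ r (Finset.notMem_empty r)
    exact mul_comm _ _
  | insert t s _ ih =>
    intro σ τ hστ
    set σ' := Function.update σ t (τ t)
    have hσ'τ : ∀ r ∉ s, σ' r = τ r := by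
      intro r hr
      by_cases hrt : r = t
      · subst hrt; simp [σ']
      · simp [σ', hrt, hστ r (by simp [hrt, hr])]
    have hfar := ih σ' τ hσ'τ
    have hnear := hupd σ t (τ t)
    apply mul_right_cancel₀ (hg σ')
    linear_combination g τ * hnear + g σ * hfar

theorem eq_of_mul_eq_mul_of_sum_eq_one {α R : Type*} [Fintype α] [CommSemiring R]
    {f g : α → R} (h : ∀ σ τ, f σ * g τ = g σ * f τ) (hf : ∑ σ, f σ = 1) (hg : ∑ σ, g σ = 1) :
    f = g := by
  funext τ
  have hsum : ∑ σ, f σ * g τ = ∑ σ, g σ * f τ := Finset.sum_congr rfl fun σ _ => h σ τ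
  rwa [← Finset.sum_mul, ← Finset.sum_mul, hf, hg, one_mul, one_mul, eq_comm] at hsum

theorem stmt2_general {Λ X : Type*} [DecidableEq Λ] [Fintype Λ] [Fintype X]
    [Nonempty X]
    (P P' : (Λ → X) → ℝ)
    (hpos : ∀ σ, 0 < P σ) (hsum : ∑ σ, P σ = 1)
    (hpos' : ∀ σ, 0 < P' σ) (hsum' : ∑ σ, P' σ = 1)
    (hcond : ∀ t : Λ, ∀ x : X, ∀ z : {s : Λ // s ≠ t} → X,
      P (cat t x z) / ∑ u : X, P (cat t u z) = P' (cat t x z) / ∑ u : X, P' (cat t u z)) :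
    P = P' := by
  have hupd : ∀ σ t y, P σ * P' (Function.update σ t y) = P' σ * P (Function.update σ t y) := by
    intro σ t y
    have h := mul_eq_mul_of_div_eq_div_of_div_eq_div
      (Finset.sum_pos (fun u _ => hpos _) Finset.univ_nonempty).ne'
      (Finset.sum_pos (fun u _ => hpos' _) Finset.univ_nonempty).ne'
      (hcond t (σ t) fun s => σ s) (hcond t y fun s => σ s)
    rwa [cat_restrict_eq_update, cat_restrict_eq_update, Function.update_eq_self] at h
  exact eq_of_mul_eq_mul_of_sum_eq_one
    (mul_eq_mul_of_mul_update_eq (fun σ => (hpos' σ).ne') hupd) hsum hsum'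

theorem stmt2 {Λ X : Type*} [DecidableEq Λ] [Fintype Λ] [Fintype X]
    [Nonempty Λ] [Nonempty X]
    (P P' : (Λ → X) → ℝ)
    (hpos : ∀ σ, 0 < P σ) (hsum : ∑ σ, P σ = 1)
    (hpos' : ∀ σ, 0 < P' σ) (hsum' : ∑ σ, P' σ = 1)
    (hcond : ∀ t : Λ, ∀ x : X, ∀ z : {s : Λ // s ≠ t} → X,
      P (cat t x z) / ∑ u : X, P (cat t u z) = P' (cat t x z) / ∑ u : X, P' (cat t u z)) :
    P = P' :=
  stmt2_general P P' hpos hsum hpos' hsum' hcond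
end

section
/- Let Λ = {t₁,...,tₙ} with a fixed enumeration, X a finite set, and P a strictly positive probability distribution on X^Λ with one-point conditional probabilities Q_t^z. Then for every x, u ∈ X^Λ, P(x) = (∏_{j=1}^n Q_{t_j}^{(xu)_j}(x_j)/Q_{t_j}^{(xu)_j}(u_j)) · (Σ_{α∈X^Λ} ∏_{j=1}^n Q_{t_j}^{(αu)_j}(α_j)/Q_{t_j}^{(αu)_j}(u_j))^{-1}, where (xu)_j denotes the boundary configuration x₁...x_{j-1}u_{j+1}...uₙ on Λ\{t_j}. -/
/-- The boundary configuration on `Λ \ {j}` (Λ = Fin n) equal to `x` at points before `j`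
and to `u` at points after `j`. -/
def mix {n : ℕ} {X : Type*} (j : Fin n) (x u : Fin n → X) : {i : Fin n // i ≠ j} → X :=
  fun i => if i.1 < j then x i.1 else u i.1

open Finset

theorem Finset.prod_range_div_of_ne_zero {K : Type*} [CommGroupWithZero K] (f : ℕ → K)
    (hf : ∀ k, f k ≠ 0) (n : ℕ) : ∏ k ∈ range n, f (k + 1) / f k = f n / f 0 := by
  simpa using congrArg Units.val (prod_range_div (fun k => Units.mk0 (f k) (hf k)) n)

def mixUpTo {n : ℕ} {X : Type*} (k : ℕ) (x u : Fin n → X) : Fin n → X :=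
  fun i => if (i : ℕ) < k then x i else u i

section MixUpTo

variable {n : ℕ} {X : Type*}

@[simp]
theorem mixUpTo_zero (x u : Fin n → X) : mixUpTo 0 x u = u := by
  funext i; simp [mixUpTo]

theorem mixUpTo_of_le {k : ℕ} (hk : n ≤ k) (x u : Fin n → X) : mixUpTo k x u = x := by
  funext i; simp [mixUpTo, i.isLt.trans_le hk]

theorem cat_mix_self (j : Fin n) (x u : Fin n → X) :
    cat j (x j) (mix j x u) = mixUpTo (j + 1) x u := by
  funext s
  rcases lt_trichotomy s j with hlt | rfl | hgt
  · simp [cat, mix, hlt.ne, hlt, mixUpTo, Nat.lt_succ_of_lt (Fin.lt_def.mp hlt)]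
  · simp [cat, mixUpTo]
  · simp [cat, mix, hgt.ne', hgt.not_gt, mixUpTo, Nat.not_lt.mpr (Fin.lt_def.mp hgt)]

theorem cat_mix_right (j : Fin n) (x u : Fin n → X) :
    cat j (u j) (mix j x u) = mixUpTo j x u := by
  funext s
  by_cases h : s = j
  · subst h; simp [cat, mixUpTo]
  · simp [cat, mix, h, mixUpTo]

end MixUpTo

theorem prod_cond_div_cond_mix {n : ℕ} {X : Type*} [Fintype X]
    (P : (Fin n → X) → ℝ) (hpos : ∀ σ, 0 < P σ)
    (Q : ∀ j : Fin n, ({i : Fin n // i ≠ j} → X) → X → ℝ)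
    (hQ : ∀ j z x, Q j z x = P (cat j x z) / ∑ v : X, P (cat j v z)) (x u : Fin n → X) :
    ∏ j : Fin n, Q j (mix j x u) (x j) / Q j (mix j x u) (u j) = P x / P u := by
  have hZ : ∀ j : Fin n, ∑ v : X, P (cat j v (mix j x u)) ≠ 0 := fun j =>
    (sum_pos (fun v _ => hpos _) ⟨x j, mem_univ _⟩).ne'
  calc ∏ j : Fin n, Q j (mix j x u) (x j) / Q j (mix j x u) (u j)
      = ∏ j : Fin n, P (mixUpTo (j + 1) x u) / P (mixUpTo j x u) :=
        prod_congr rfl fun j _ => by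
          rw [hQ, hQ, div_div_div_cancel_right₀ (hZ j), cat_mix_self, cat_mix_right]
    _ = ∏ k ∈ range n, P (mixUpTo (k + 1) x u) / P (mixUpTo k x u) :=
        Fin.prod_univ_eq_prod_range (fun k => P (mixUpTo (k + 1) x u) / P (mixUpTo k x u)) n
    _ = P x / P u := by
      rw [prod_range_div_of_ne_zero (fun k => P (mixUpTo k x u)) (fun k => (hpos _).ne'), mixUpTo_of_le le_rfl,
        mixUpTo_zero]

theorem stmt3_general {n : ℕ} {X : Type*} [Fintype X]
    (P : (Fin n → X) → ℝ) (hpos : ∀ σ, 0 < P σ) (hsum : ∑ σ, P σ = 1)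
    (Q : ∀ j : Fin n, ({i : Fin n // i ≠ j} → X) → X → ℝ)
    (hQ : ∀ j z x, Q j z x = P (cat j x z) / ∑ v : X, P (cat j v z)) :
    ∀ x u : Fin n → X,
      P x = (∏ j : Fin n, Q j (mix j x u) (x j) / Q j (mix j x u) (u j))
        * (∑ α : Fin n → X,
            ∏ j : Fin n, Q j (mix j α u) (α j) / Q j (mix j α u) (u j))⁻¹ := by
  intro x u
  simp only [prod_cond_div_cond_mix P hpos Q hQ _ u]
  rw [← sum_div, hsum, one_div, inv_inv, div_mul_cancel₀ _ (hpos u).ne']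

theorem stmt3 {n : ℕ} {X : Type*} [Fintype X] [Nonempty X] (hn : 0 < n)
    (P : (Fin n → X) → ℝ) (hpos : ∀ σ, 0 < P σ) (hsum : ∑ σ, P σ = 1)
    (Q : ∀ j : Fin n, ({i : Fin n // i ≠ j} → X) → X → ℝ)
    (hQ : ∀ j z x, Q j z x = P (cat j x z) / ∑ v : X, P (cat j v z)) :
    ∀ x u : Fin n → X,
      P x = (∏ j : Fin n, Q j (mix j x u) (x j) / Q j (mix j x u) (u j))
        * (∑ α : Fin n → X,
            ∏ j : Fin n, Q j (mix j α u) (α j) / Q j (mix j α u) (u j))⁻¹ :=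
  stmt3_general P hpos hsum Q hQ
end

section
/- Let Q = {q_t^z} be a strictly positive consistent one-point system on finite Λ with finite state space X, and fix configurations x, u ∈ X^Λ. Then the product ∏_{j=1}^n q_{t_j}^{(xu)_j}(x_j)/q_{t_j}^{(xu)_j}(u_j) does not depend on the chosen enumeration t₁,...,tₙ of Λ. In particular, for two enumerations differing by a transposition of adjacent indices, the products are equal. -/
/-- Boundary configuration on `Λ \ {e j}` for an enumeration `e : Fin n ≃ Λ`:
equal to `x` at points enumerated before `j` and to `u` at points after `j`. -/
def mixE {n : ℕ} {Λ X : Type*} (e : Fin n ≃ Λ) (j : Fin n) (x u : Λ → X) :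
    {s : Λ // s ≠ e j} → X :=
  fun s => if e.symm s.1 < j then x s.1 else u s.1

section Aux

variable {Λ X : Type*} [DecidableEq Λ] [Fintype Λ] [Fintype X]

/-- Congruence for `q` when the point and the boundary data agree. -/
lemma q_congr_aux (q : ∀ t : Λ, ({s : Λ // s ≠ t} → X) → X → ℝ)
    {t t' : Λ} (h : t = t') {z : {s : Λ // s ≠ t} → X} {z' : {s : Λ // s ≠ t'} → X}
    (hz : ∀ s (hs : s ≠ t) (hs' : s ≠ t'), z ⟨s, hs⟩ = z' ⟨s, hs'⟩) (c c' : X) (hc : c = c') :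
    q t z c = q t' z' c' := by
  subst h; subst hc
  congr 1
  funext s
  obtain ⟨s, hs⟩ := s
  exact hz s hs hs

/-- The product associated to an enumeration. -/
noncomputable def prodF {n : ℕ} (q : ∀ t : Λ, ({s : Λ // s ≠ t} → X) → X → ℝ)
    (x u : Λ → X) (e : Fin n ≃ Λ) : ℝ :=
  ∏ j : Fin n, q (e j) (mixE e j x u) (x (e j)) / q (e j) (mixE e j x u) (u (e j))

lemma prodF_swap {m : ℕ} (q : ∀ t : Λ, ({s : Λ // s ≠ t} → X) → X → ℝ)
    (hqpos : ∀ t z x, 0 < q t z x)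
    (hcons : ∀ t s : Λ, t ≠ s → ∀ x u y v : X, ∀ z : {r : Λ // r ≠ t ∧ r ≠ s} → X,
      q t (catT t s y z) x * q s (catS t s x z) v * q t (catT t s v z) u * q s (catS t s u z) y
        = q t (catT t s y z) u * q s (catS t s u z) v * q t (catT t s v z) x
            * q s (catS t s x z) y)
    (x u : Λ → X) (i : Fin m) (e : Fin (m + 1) ≃ Λ) :
    prodF q x u ((Equiv.swap i.castSucc i.succ).trans e) = prodF q x u e := by
  set a : Fin (m + 1) := i.castSucc with ha
  set b : Fin (m + 1) := i.succ with hb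
  have hab : a ≠ b := (Fin.castSucc_lt_succ (i := i)).ne
  have hval : b.1 = a.1 + 1 := by simp [ha, hb]
  set e'' : Fin (m + 1) ≃ Λ := (Equiv.swap a b).trans e with he''
  have hsymm : ∀ s : Λ, e''.symm s = Equiv.swap a b (e.symm s) := by
    intro s
    simp [he'', Equiv.symm_swap]
  have heab : e a ≠ e b := e.injective.ne hab
  -- generic splitting of the product
  have hsplit : ∀ g : Fin (m + 1) → ℝ,
      ∏ j : Fin (m + 1), g j = g a * (g b * ∏ j ∈ (Finset.univ.erase a).erase b, g j) := by
    intro g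
    rw [← Finset.mul_prod_erase Finset.univ g (Finset.mem_univ a),
      ← Finset.mul_prod_erase (Finset.univ.erase a) g
        (Finset.mem_erase.2 ⟨hab.symm, Finset.mem_univ b⟩)]
  set f : Fin (m + 1) → ℝ :=
    fun j => q (e j) (mixE e j x u) (x (e j)) / q (e j) (mixE e j x u) (u (e j)) with hf
  set f'' : Fin (m + 1) → ℝ :=
    fun j => q (e'' j) (mixE e'' j x u) (x (e'' j)) / q (e'' j) (mixE e'' j x u) (u (e'' j))
    with hf''
  have hrest : ∀ j ∈ (Finset.univ.erase a).erase b, f'' j = f j := by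
    intro j hj
    have hjb : j ≠ b := (Finset.mem_erase.1 hj).1
    have hja : j ≠ a := (Finset.mem_erase.1 (Finset.mem_erase.1 hj).2).1
    have hswapj : Equiv.swap a b j = j := Equiv.swap_apply_of_ne_of_ne hja hjb
    have hjav : j.1 ≠ a.1 := fun h => hja (Fin.val_injective h)
    have hjbv : j.1 ≠ b.1 := fun h => hjb (Fin.val_injective h)
    have hej : e'' j = e j := by simp [he'', hswapj]
    have hlt : ∀ k : Fin (m + 1), Equiv.swap a b k < j ↔ k < j := by
      intro k
      rcases eq_or_ne k a with rfl | hka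
      · rw [Equiv.swap_apply_left]
        simp only [Fin.lt_def]
        omega
      rcases eq_or_ne k b with rfl | hkb
      · rw [Equiv.swap_apply_right]
        simp only [Fin.lt_def]
        omega
      · rw [Equiv.swap_apply_of_ne_of_ne hka hkb]
    have hq : ∀ c : X, q (e'' j) (mixE e'' j x u) c = q (e j) (mixE e j x u) c := by
      intro c
      refine q_congr_aux q hej (fun s hs hs' => ?_) c c rfl
      simp only [mixE, hsymm]
      by_cases h : e.symm s < j
      · rw [if_pos ((hlt _).2 h), if_pos h]
      · rw [if_neg (fun hh => h ((hlt _).1 hh)), if_neg h]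
    simp only [hf, hf'', hej, hq]
  -- boundary data away from both points
  set z : {r : Λ // r ≠ e a ∧ r ≠ e b} → X :=
    fun r => if e.symm r.1 < a then x r.1 else u r.1 with hz
  have hsymm_ne : ∀ (s : Λ) (t : Fin (m + 1)), s ≠ e t → e.symm s ≠ t := by
    intro s t h hh
    exact h (by rw [← hh, Equiv.apply_symm_apply])
  -- identify the four boundary configurations
  have h1 : ∀ c, q (e'' a) (mixE e'' a x u) c = q (e b) (catS (e a) (e b) (u (e a)) z) c := by
    intro c
    have : e'' a = e b := by simp [he'']
    refine q_congr_aux q this (fun s hs hs' => ?_) c c rfl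
    simp only [mixE, catS, hsymm, hz]
    rcases eq_or_ne s (e a) with rfl | hsa
    · rw [dif_pos rfl, Equiv.symm_apply_apply, Equiv.swap_apply_left,
        if_neg (by simp only [Fin.lt_def]; omega)]
    · have h1 : e.symm s ≠ a := hsymm_ne s a hsa
      have h2 : e.symm s ≠ b := hsymm_ne s b hs'
      rw [dif_neg hsa, Equiv.swap_apply_of_ne_of_ne h1 h2]
  have h2 : ∀ c, q (e'' b) (mixE e'' b x u) c = q (e a) (catT (e a) (e b) (x (e b)) z) c := by
    intro c
    have hebb : e'' b = e a := by simp [he'']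
    refine q_congr_aux q hebb (fun s hs hs' => ?_) c c rfl
    simp only [mixE, catT, hsymm, hz]
    rcases eq_or_ne s (e b) with rfl | hsb
    · rw [dif_pos rfl, Equiv.symm_apply_apply, Equiv.swap_apply_right,
        if_pos (by simp only [Fin.lt_def]; omega)]
    · have h1 : e.symm s ≠ a := hsymm_ne s a hs'
      have h2 : e.symm s ≠ b := hsymm_ne s b hsb
      have h1v : (e.symm s).1 ≠ a.1 := fun h => h1 (Fin.val_injective h)
      have h2v : (e.symm s).1 ≠ b.1 := fun h => h2 (Fin.val_injective h)
      rw [dif_neg hsb, Equiv.swap_apply_of_ne_of_ne h1 h2]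
      by_cases h : e.symm s < a
      · rw [if_pos (by simp only [Fin.lt_def] at h ⊢; omega), if_pos h]
      · rw [if_neg (by simp only [Fin.lt_def] at h ⊢; omega), if_neg h]
  have h3 : ∀ c, q (e a) (mixE e a x u) c = q (e a) (catT (e a) (e b) (u (e b)) z) c := by
    intro c
    refine q_congr_aux q rfl (fun s hs hs' => ?_) c c rfl
    simp only [mixE, catT, hz]
    rcases eq_or_ne s (e b) with rfl | hsb
    · rw [dif_pos rfl, Equiv.symm_apply_apply, if_neg (by simp only [Fin.lt_def]; omega)]
    · rw [dif_neg hsb]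
  have h4 : ∀ c, q (e b) (mixE e b x u) c = q (e b) (catS (e a) (e b) (x (e a)) z) c := by
    intro c
    refine q_congr_aux q rfl (fun s hs hs' => ?_) c c rfl
    simp only [mixE, catS, hz]
    rcases eq_or_ne s (e a) with rfl | hsa
    · rw [dif_pos rfl, Equiv.symm_apply_apply, if_pos (by simp only [Fin.lt_def]; omega)]
    · have h1 : e.symm s ≠ a := hsymm_ne s a hsa
      have h1v : (e.symm s).1 ≠ a.1 := fun h => h1 (Fin.val_injective h)
      rw [dif_neg hsa]
      by_cases h : e.symm s < a
      · rw [if_pos (by simp only [Fin.lt_def] at h ⊢; omega), if_pos h]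
      · rw [if_neg (by simp only [Fin.lt_def] at h ⊢; omega), if_neg h]
  -- the two exchanged factors
  have hmain : f'' a * f'' b = f a * f b := by
    simp only [hf, hf'', h1 (x (e'' a)), h1 (u (e'' a)), h2 (x (e'' b)), h2 (u (e'' b)),
      h3 (x (e a)), h3 (u (e a)), h4 (x (e b)), h4 (u (e b))]
    have heaa : e'' a = e b := by simp [he'']
    have hebb : e'' b = e a := by simp [he'']
    rw [heaa, hebb]
    have H := hcons (e a) (e b) heab (x (e a)) (u (e a)) (u (e b)) (x (e b)) z
    have p1 := hqpos (e b) (catS (e a) (e b) (u (e a)) z) (u (e b))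
    have p2 := hqpos (e a) (catT (e a) (e b) (x (e b)) z) (u (e a))
    have p3 := hqpos (e a) (catT (e a) (e b) (u (e b)) z) (u (e a))
    have p4 := hqpos (e b) (catS (e a) (e b) (x (e a)) z) (u (e b))
    rw [div_mul_div_comm, div_mul_div_comm, div_eq_div_iff (by positivity) (by positivity)]
    nlinarith [H]
  calc prodF q x u e'' = f'' a * (f'' b * ∏ j ∈ (Finset.univ.erase a).erase b, f'' j) :=
        hsplit f''
    _ = f a * (f b * ∏ j ∈ (Finset.univ.erase a).erase b, f j) := by
        rw [Finset.prod_congr rfl hrest, ← mul_assoc, ← mul_assoc, hmain]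
    _ = prodF q x u e := (hsplit f).symm

lemma prodF_perm {n : ℕ} (q : ∀ t : Λ, ({s : Λ // s ≠ t} → X) → X → ℝ)
    (hqpos : ∀ t z x, 0 < q t z x)
    (hcons : ∀ t s : Λ, t ≠ s → ∀ x u y v : X, ∀ z : {r : Λ // r ≠ t ∧ r ≠ s} → X,
      q t (catT t s y z) x * q s (catS t s x z) v * q t (catT t s v z) u * q s (catS t s u z) y
        = q t (catT t s y z) u * q s (catS t s u z) v * q t (catT t s v z) x
            * q s (catS t s x z) y)
    (x u : Λ → X) (σ : Equiv.Perm (Fin n)) (e : Fin n ≃ Λ) :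
    prodF q x u (σ.trans e) = prodF q x u e := by
  match n with
  | 0 =>
    simp [prodF]
  | m + 1 =>
    have hσ : σ ∈ Submonoid.closure
        (Set.range fun i : Fin m => Equiv.swap i.castSucc i.succ) := by
      rw [Equiv.Perm.mclosure_swap_castSucc_succ m]
      exact Submonoid.mem_top σ
    induction hσ using Submonoid.closure_induction generalizing e with
    | one =>
      have : (1 : Equiv.Perm (Fin (m + 1))).trans e = e := Equiv.refl_trans e
      rw [this]
    | mem σ hσ =>
      obtain ⟨i, rfl⟩ := hσ
      exact prodF_swap q hqpos hcons x u i e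
    | mul σ τ hσ hτ ihσ ihτ =>
      have : (σ * τ).trans e = τ.trans (σ.trans e) := Equiv.trans_assoc τ σ e
      rw [this, ihτ _, ihσ _]

end Aux

theorem stmt4 {n : ℕ} {Λ X : Type*} [DecidableEq Λ] [Fintype Λ] [Fintype X] [Nonempty X]
    (q : ∀ t : Λ, ({s : Λ // s ≠ t} → X) → X → ℝ)
    (hqpos : ∀ t z x, 0 < q t z x) (hqsum : ∀ t z, ∑ x : X, q t z x = 1)
    (hcons : ∀ t s : Λ, t ≠ s → ∀ x u y v : X, ∀ z : {r : Λ // r ≠ t ∧ r ≠ s} → X,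
      q t (catT t s y z) x * q s (catS t s x z) v * q t (catT t s v z) u * q s (catS t s u z) y
        = q t (catT t s y z) u * q s (catS t s u z) v * q t (catT t s v z) x
            * q s (catS t s x z) y)
    (x u : Λ → X) :
    ∀ e e' : Fin n ≃ Λ,
      (∏ j : Fin n, q (e j) (mixE e j x u) (x (e j)) / q (e j) (mixE e j x u) (u (e j)))
        = ∏ j : Fin n, q (e' j) (mixE e' j x u) (x (e' j)) / q (e' j) (mixE e' j x u) (u (e' j)) := by
  intro e e'
  have key := prodF_perm q hqpos hcons x u (e'.trans e.symm) e
  have he : (e'.trans e.symm).trans e = e' := by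
    rw [Equiv.trans_assoc, Equiv.symm_trans_self, Equiv.trans_refl]
  rw [he] at key
  exact key.symm
end

section
/- Let Q = {q_t^z} be a strictly positive consistent one-point system on finite Λ with finite state space X. Define for u, x ∈ X^Λ the ratio R_u(x) = ∏_{j=1}^n q_{t_j}^{(xu)_j}(x_j)/q_{t_j}^{(xu)_j}(u_j). Then for any two reference configurations u, u' ∈ X^Λ, the normalized functions x ↦ R_u(x)/Σ_α R_u(α) and x ↦ R_{u'}(x)/Σ_α R_{u'}(α) coincide. -/
/-- The ratio R_u(x) built from the one-point system along the enumeration of Fin n. -/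
noncomputable def Ratio {n : ℕ} {X : Type*} [Fintype X]
    (q : ∀ j : Fin n, ({i : Fin n // i ≠ j} → X) → X → ℝ) (u x : Fin n → X) : ℝ :=
  ∏ j : Fin n, q j (mix j x u) (x j) / q j (mix j x u) (u j)

section Aux
set_option linter.unusedSectionVars false

variable {n : ℕ} {X : Type*} [Fintype X]

lemma Ratio_pos (q : ∀ j : Fin n, ({i : Fin n // i ≠ j} → X) → X → ℝ)
    (hqpos : ∀ j z x, 0 < q j z x) (u x : Fin n → X) : 0 < Ratio q u x :=
  Finset.prod_pos fun _ _ => div_pos (hqpos _ _ _) (hqpos _ _ _)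

/-- configuration off `t` which is `x` below threshold `k` and `u` at or above. -/
def Wc (t : Fin n) (k : ℕ) (x u : Fin n → X) : {i : Fin n // i ≠ t} → X :=
  fun i => if i.1.1 < k then x i.1 else u i.1

lemma mix_eq_Wc (t : Fin n) (x u : Fin n → X) :
    mix t x u = Wc t (t.1 + 1) x u := by
  funext i
  simp only [mix, Wc]
  by_cases h : i.1 < t
  · rw [if_pos h, if_pos (by have := (Fin.lt_def).1 h; omega)]
  · have hne : i.1.1 ≠ t.1 := fun hh => i.2 (Fin.ext hh)
    have h' : ¬ i.1.1 < t.1 := fun hh => h (Fin.lt_def.mpr hh)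
    rw [if_neg h, if_neg (by omega)]

lemma mix_update_le (t j : Fin n) (hjt : j ≤ t) (x u : Fin n → X) (b : X) :
    mix j (Function.update x t b) u = mix j x u := by
  funext i
  simp only [mix]
  by_cases h : i.1 < j
  · rw [if_pos h, if_pos h, Function.update_of_ne (ne_of_lt (lt_of_lt_of_le h hjt))]
  · rw [if_neg h, if_neg h]

lemma prod_split (t : Fin n) (f : Fin n → ℝ) :
    ∏ j, f j = (∏ j ∈ Finset.univ.filter (fun j => j < t), f j) * f t *
      ∏ j ∈ Finset.univ.filter (fun j => t < j), f j := by
  rw [← Finset.prod_filter_mul_prod_filter_not Finset.univ (fun j => j < t) f]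
  have h2 : Finset.univ.filter (fun j : Fin n => ¬ j < t)
      = insert t (Finset.univ.filter (fun j : Fin n => t < j)) := by
    ext j
    simp only [Finset.mem_filter, Finset.mem_univ, true_and, Finset.mem_insert, not_lt]
    constructor
    · intro h
      rcases eq_or_lt_of_le h with h | h
      · exact Or.inl h.symm
      · exact Or.inr h
    · rintro (rfl | h)
      · exact le_rfl
      · exact h.le
  rw [h2, Finset.prod_insert (by simp), mul_assoc]

lemma catT_x (t j : Fin n) (x u : Fin n → X) :
    catT t j (x j) (fun r : {r : Fin n // r ≠ t ∧ r ≠ j} =>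
        if r.1.1 < j.1 then x r.1 else u r.1)
      = Wc t (j.1 + 1) x u := by
  funext r
  simp only [catT, Wc]
  by_cases h : r.1 = j
  · rw [dif_pos h, if_pos (by rw [h]; omega), h]
  · rw [dif_neg h]
    have hne : r.1.1 ≠ j.1 := fun hh => h (Fin.ext hh)
    by_cases h2 : r.1.1 < j.1
    · rw [if_pos h2, if_pos (by omega)]
    · rw [if_neg h2, if_neg (by omega)]

lemma catT_u (t j : Fin n) (x u : Fin n → X) :
    catT t j (u j) (fun r : {r : Fin n // r ≠ t ∧ r ≠ j} =>
        if r.1.1 < j.1 then x r.1 else u r.1)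
      = Wc t j.1 x u := by
  funext r
  simp only [catT, Wc]
  by_cases h : r.1 = j
  · rw [dif_pos h, if_neg (by rw [h]; omega), h]
  · rw [dif_neg h]

lemma catS_x (t j : Fin n) (htj : t < j) (x u : Fin n → X) :
    catS t j (x t) (fun r : {r : Fin n // r ≠ t ∧ r ≠ j} =>
        if r.1.1 < j.1 then x r.1 else u r.1)
      = mix j x u := by
  funext r
  simp only [catS, mix]
  by_cases h : r.1 = t
  · rw [dif_pos h, if_pos (by rw [h]; exact htj), h]
  · rw [dif_neg h]
    by_cases h2 : r.1 < j
    · rw [if_pos h2, if_pos ((Fin.lt_def).1 h2)]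
    · rw [if_neg h2, if_neg (fun hh => h2 (Fin.lt_def.mpr hh))]

lemma catS_b (t j : Fin n) (htj : t < j) (x u : Fin n → X) (b : X) :
    catS t j b (fun r : {r : Fin n // r ≠ t ∧ r ≠ j} =>
        if r.1.1 < j.1 then x r.1 else u r.1)
      = mix j (Function.update x t b) u := by
  funext r
  simp only [catS, mix]
  by_cases h : r.1 = t
  · rw [dif_pos h, if_pos (by rw [h]; exact htj), h, Function.update_self]
  · rw [dif_neg h]
    by_cases h2 : r.1 < j
    · rw [if_pos h2, if_pos ((Fin.lt_def).1 h2), Function.update_of_ne h]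
    · rw [if_neg h2, if_neg (fun hh => h2 (Fin.lt_def.mpr hh))]


lemma stepdiv (q : ∀ j : Fin n, ({i : Fin n // i ≠ j} → X) → X → ℝ)
    (hqpos : ∀ j z x, 0 < q j z x)
    (hcons : ∀ t s : Fin n, t ≠ s → ∀ x u y v : X, ∀ z : {r : Fin n // r ≠ t ∧ r ≠ s} → X,
      q t (catT t s y z) x * q s (catS t s x z) v * q t (catT t s v z) u * q s (catS t s u z) y
        = q t (catT t s y z) u * q s (catS t s u z) v * q t (catT t s v z) x
            * q s (catS t s x z) y)
    (t j : Fin n) (htj : t < j) (x u : Fin n → X) (b : X) :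
    q t (Wc t (j.1 + 1) x u) (x t) / q t (Wc t (j.1 + 1) x u) b
      = q t (Wc t j.1 x u) (x t) / q t (Wc t j.1 x u) b *
        ((q j (mix j x u) (x j) * q j (mix j (Function.update x t b) u) (u j)) /
         (q j (mix j x u) (u j) * q j (mix j (Function.update x t b) u) (x j))) := by
  have h := hcons t j (ne_of_lt htj) (x t) b (x j) (u j)
      (fun r => if r.1.1 < j.1 then x r.1 else u r.1)
  rw [catT_x, catT_u, catS_x t j htj, catS_b t j htj] at h
  have e1 := (hqpos t (Wc t (j.1 + 1) x u) b).ne'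
  have e2 := (hqpos t (Wc t j.1 x u) b).ne'
  have e3 := (hqpos j (mix j x u) (u j)).ne'
  have e4 := (hqpos j (mix j (Function.update x t b) u) (x j)).ne'
  field_simp
  linear_combination h

lemma telescope (q : ∀ j : Fin n, ({i : Fin n // i ≠ j} → X) → X → ℝ)
    (hqpos : ∀ j z x, 0 < q j z x)
    (hcons : ∀ t s : Fin n, t ≠ s → ∀ x u y v : X, ∀ z : {r : Fin n // r ≠ t ∧ r ≠ s} → X,
      q t (catT t s y z) x * q s (catS t s x z) v * q t (catT t s v z) u * q s (catS t s u z) y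
        = q t (catT t s y z) u * q s (catS t s u z) v * q t (catT t s v z) x
            * q s (catS t s x z) y)
    (t : Fin n) (x u : Fin n → X) (b : X) :
    ∀ k : ℕ, t.1 + 1 ≤ k → k ≤ n →
      q t (Wc t k x u) (x t) / q t (Wc t k x u) b
        = q t (Wc t (t.1 + 1) x u) (x t) / q t (Wc t (t.1 + 1) x u) b *
          ∏ j ∈ Finset.univ.filter (fun j : Fin n => t < j ∧ j.1 < k),
            ((q j (mix j x u) (x j) * q j (mix j (Function.update x t b) u) (u j)) /
             (q j (mix j x u) (u j) * q j (mix j (Function.update x t b) u) (x j))) := by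
  intro k
  induction k with
  | zero => omega
  | succ k ih =>
    intro hk1 hkn
    rcases eq_or_lt_of_le hk1 with heq | hlt
    · have h0 : k = t.1 := by omega
      subst h0
      have hemp : Finset.univ.filter (fun j : Fin n => t < j ∧ j.1 < t.1 + 1) = ∅ := by
        ext j
        simp only [Finset.mem_filter, Finset.mem_univ, true_and, Finset.notMem_empty,
          iff_false, not_and, Fin.lt_def]
        omega
      rw [hemp, Finset.prod_empty, mul_one]
    · have hkn' : k < n := hkn
      have htk : t < (⟨k, hkn'⟩ : Fin n) := by
        simp only [Fin.lt_def, Fin.val_mk]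
        omega
      have hset : Finset.univ.filter (fun j : Fin n => t < j ∧ j.1 < k + 1)
          = insert (⟨k, hkn'⟩ : Fin n)
              (Finset.univ.filter (fun j : Fin n => t < j ∧ j.1 < k)) := by
        ext j
        simp only [Finset.mem_filter, Finset.mem_univ, true_and, Finset.mem_insert,
          Fin.lt_def, Fin.ext_iff, Fin.val_mk]
        omega
      have hnot : (⟨k, hkn'⟩ : Fin n) ∉
          Finset.univ.filter (fun j : Fin n => t < j ∧ j.1 < k) := by
        simp
      have step : q t (Wc t (k + 1) x u) (x t) / q t (Wc t (k + 1) x u) b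
          = q t (Wc t k x u) (x t) / q t (Wc t k x u) b *
            ((q ⟨k, hkn'⟩ (mix ⟨k, hkn'⟩ x u) (x ⟨k, hkn'⟩) *
                q ⟨k, hkn'⟩ (mix ⟨k, hkn'⟩ (Function.update x t b) u) (u ⟨k, hkn'⟩)) /
             (q ⟨k, hkn'⟩ (mix ⟨k, hkn'⟩ x u) (u ⟨k, hkn'⟩) *
                q ⟨k, hkn'⟩ (mix ⟨k, hkn'⟩ (Function.update x t b) u) (x ⟨k, hkn'⟩))) :=
        stepdiv q hqpos hcons t ⟨k, hkn'⟩ htk x u b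
      rw [hset, Finset.prod_insert hnot, step, ih (by omega) hkn'.le]
      ring


lemma lemA (q : ∀ j : Fin n, ({i : Fin n // i ≠ j} → X) → X → ℝ)
    (hqpos : ∀ j z x, 0 < q j z x)
    (hcons : ∀ t s : Fin n, t ≠ s → ∀ x u y v : X, ∀ z : {r : Fin n // r ≠ t ∧ r ≠ s} → X,
      q t (catT t s y z) x * q s (catS t s x z) v * q t (catT t s v z) u * q s (catS t s u z) y
        = q t (catT t s y z) u * q s (catS t s u z) v * q t (catT t s v z) x
            * q s (catS t s x z) y)
    (t : Fin n) (x u : Fin n → X) (b : X) :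
    Ratio q u x / Ratio q u (Function.update x t b)
      = q t (Wc t n x u) (x t) / q t (Wc t n x u) b := by
  have tel := telescope q hqpos hcons t x u b n t.isLt le_rfl
  have hfilter : (Finset.univ.filter (fun j : Fin n => t < j ∧ j.1 < n))
      = Finset.univ.filter (fun j : Fin n => t < j) := by
    ext j
    simp [j.isLt]
  rw [hfilter] at tel
  rw [tel, ← mix_eq_Wc]
  unfold Ratio
  rw [prod_split t (fun j => q j (mix j x u) (x j) / q j (mix j x u) (u j)),
    prod_split t (fun j => q j (mix j (Function.update x t b) u) (Function.update x t b j) /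
      q j (mix j (Function.update x t b) u) (u j))]
  have hlow : ∀ j ∈ Finset.univ.filter (fun j : Fin n => j < t),
      q j (mix j (Function.update x t b) u) (Function.update x t b j) /
        q j (mix j (Function.update x t b) u) (u j)
      = q j (mix j x u) (x j) / q j (mix j x u) (u j) := by
    intro j hj
    have hjt : j < t := by simpa using hj
    rw [mix_update_le t j hjt.le, Function.update_of_ne (ne_of_lt hjt)]
  have hhigh : ∀ j ∈ Finset.univ.filter (fun j : Fin n => t < j),
      q j (mix j (Function.update x t b) u) (Function.update x t b j) /
        q j (mix j (Function.update x t b) u) (u j)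
      = q j (mix j (Function.update x t b) u) (x j) /
        q j (mix j (Function.update x t b) u) (u j) := by
    intro j hj
    have hjt : t < j := by simpa using hj
    rw [Function.update_of_ne (ne_of_gt hjt)]
  rw [Finset.prod_congr rfl hlow, Finset.prod_congr rfl hhigh,
    mix_update_le t t le_rfl, Function.update_self]
  rw [Finset.prod_div_distrib, Finset.prod_div_distrib, Finset.prod_div_distrib,
    Finset.prod_div_distrib,
    Finset.prod_mul_distrib, Finset.prod_mul_distrib]
  have P1x : 0 < ∏ j ∈ Finset.univ.filter (fun j : Fin n => j < t),
      q j (mix j x u) (x j) := Finset.prod_pos fun _ _ => hqpos _ _ _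
  have P1u : 0 < ∏ j ∈ Finset.univ.filter (fun j : Fin n => j < t),
      q j (mix j x u) (u j) := Finset.prod_pos fun _ _ => hqpos _ _ _
  have P2 : 0 < ∏ j ∈ Finset.univ.filter (fun j : Fin n => t < j),
      q j (mix j x u) (x j) := Finset.prod_pos fun _ _ => hqpos _ _ _
  have P3 : 0 < ∏ j ∈ Finset.univ.filter (fun j : Fin n => t < j),
      q j (mix j x u) (u j) := Finset.prod_pos fun _ _ => hqpos _ _ _
  have P4 : 0 < ∏ j ∈ Finset.univ.filter (fun j : Fin n => t < j),
      q j (mix j (Function.update x t b) u) (x j) :=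
    Finset.prod_pos fun _ _ => hqpos _ _ _
  have P5 : 0 < ∏ j ∈ Finset.univ.filter (fun j : Fin n => t < j),
      q j (mix j (Function.update x t b) u) (u j) :=
    Finset.prod_pos fun _ _ => hqpos _ _ _
  have e1 := (hqpos t (mix t x u) (x t)).ne'
  have e2 := (hqpos t (mix t x u) b).ne'
  have e3 := (hqpos t (mix t x u) (u t)).ne'
  field_simp [P1x.ne', P1u.ne', P2.ne', P3.ne', P4.ne', P5.ne']


lemma Wc_top (t : Fin n) (x u : Fin n → X) :
    Wc t n x u = fun i => x i.1 :=
  funext fun i => if_pos i.1.isLt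

lemma flipdiv (q : ∀ j : Fin n, ({i : Fin n // i ≠ j} → X) → X → ℝ)
    (hqpos : ∀ j z x, 0 < q j z x)
    (hcons : ∀ t s : Fin n, t ≠ s → ∀ x u y v : X, ∀ z : {r : Fin n // r ≠ t ∧ r ≠ s} → X,
      q t (catT t s y z) x * q s (catS t s x z) v * q t (catT t s v z) u * q s (catS t s u z) y
        = q t (catT t s y z) u * q s (catS t s u z) v * q t (catT t s v z) x
            * q s (catS t s x z) y)
    (u u' x : Fin n → X) (t : Fin n) (b : X) :
    Ratio q u x / Ratio q u' x
      = Ratio q u (Function.update x t b) / Ratio q u' (Function.update x t b) := by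
  have h3 : Ratio q u x / Ratio q u (Function.update x t b)
      = Ratio q u' x / Ratio q u' (Function.update x t b) := by
    have l1 := lemA q hqpos hcons t x u b
    have l2 := lemA q hqpos hcons t x u' b
    rw [Wc_top] at l1 l2
    exact l1.trans l2.symm
  have p1 := Ratio_pos q hqpos u (Function.update x t b)
  have p2 := Ratio_pos q hqpos u' (Function.update x t b)
  have p3 := Ratio_pos q hqpos u' x
  rw [div_eq_div_iff p1.ne' p2.ne'] at h3
  rw [div_eq_div_iff p3.ne' p2.ne']
  linear_combination h3

lemma constdiv (q : ∀ j : Fin n, ({i : Fin n // i ≠ j} → X) → X → ℝ)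
    (hqpos : ∀ j z x, 0 < q j z x)
    (hcons : ∀ t s : Fin n, t ≠ s → ∀ x u y v : X, ∀ z : {r : Fin n // r ≠ t ∧ r ≠ s} → X,
      q t (catT t s y z) x * q s (catS t s x z) v * q t (catT t s v z) u * q s (catS t s u z) y
        = q t (catT t s y z) u * q s (catS t s u z) v * q t (catT t s v z) x
            * q s (catS t s x z) y)
    (u u' x y : Fin n → X) :
    Ratio q u x / Ratio q u' x = Ratio q u y / Ratio q u' y := by
  suffices h : ∀ k : ℕ, k ≤ n → Ratio q u x / Ratio q u' x
      = Ratio q u (fun i => if i.1 < k then y i else x i) /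
        Ratio q u' (fun i => if i.1 < k then y i else x i) by
    have hn := h n le_rfl
    have hy : (fun i : Fin n => if i.1 < n then y i else x i) = y :=
      funext fun i => if_pos i.isLt
    rwa [hy] at hn
  intro k
  induction k with
  | zero =>
    intro _
    have hx : (fun i : Fin n => if i.1 < 0 then y i else x i) = x :=
      funext fun i => if_neg (Nat.not_lt_zero _)
    rw [hx]
  | succ k ih =>
    intro hk
    have hkn : k < n := hk
    have hupd : (fun i : Fin n => if i.1 < k + 1 then y i else x i)
        = Function.update (fun i : Fin n => if i.1 < k then y i else x i)
            ⟨k, hkn⟩ (y ⟨k, hkn⟩) := by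
      funext i
      rw [Function.update_apply]
      by_cases h : i = ⟨k, hkn⟩
      · rw [if_pos h, h, if_pos (Nat.lt_succ_self k)]
      · have hik : i.1 ≠ k := fun hh => h (Fin.ext hh)
        rw [if_neg h]
        by_cases h2 : i.1 < k
        · rw [if_pos h2, if_pos (by omega)]
        · rw [if_neg h2, if_neg (by omega)]
    rw [hupd]
    exact (ih hkn.le).trans (flipdiv q hqpos hcons u u' _ ⟨k, hkn⟩ (y ⟨k, hkn⟩))

end Aux

theorem stmt5 {n : ℕ} {X : Type*} [Fintype X] [Nonempty X]
    (q : ∀ j : Fin n, ({i : Fin n // i ≠ j} → X) → X → ℝ)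
    (hqpos : ∀ j z x, 0 < q j z x) (hqsum : ∀ j z, ∑ x : X, q j z x = 1)
    (hcons : ∀ t s : Fin n, t ≠ s → ∀ x u y v : X, ∀ z : {r : Fin n // r ≠ t ∧ r ≠ s} → X,
      q t (catT t s y z) x * q s (catS t s x z) v * q t (catT t s v z) u * q s (catS t s u z) y
        = q t (catT t s y z) u * q s (catS t s u z) v * q t (catT t s v z) x
            * q s (catS t s x z) y)
    (u u' : Fin n → X) :
    ∀ x : Fin n → X,
      Ratio q u x / ∑ α : Fin n → X, Ratio q u α
        = Ratio q u' x / ∑ α : Fin n → X, Ratio q u' α := by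
  intro x
  have hS : 0 < ∑ α : Fin n → X, Ratio q u α :=
    Finset.sum_pos (fun α _ => Ratio_pos q hqpos u α) Finset.univ_nonempty
  have hS' : 0 < ∑ α : Fin n → X, Ratio q u' α :=
    Finset.sum_pos (fun α _ => Ratio_pos q hqpos u' α) Finset.univ_nonempty
  rw [div_eq_div_iff hS.ne' hS'.ne', Finset.mul_sum, Finset.mul_sum]
  apply Finset.sum_congr rfl
  intro α _
  have h := constdiv q hqpos hcons u u' x α
  rw [div_eq_div_iff (Ratio_pos q hqpos u' x).ne' (Ratio_pos q hqpos u' α).ne'] at h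
  linear_combination h
end

section
/- Let Λ, X be finite and Φ a potential on Λ. The Gibbs one-point system q_t^z(x) = exp(−H_t^z(x)) / Σ_{α∈X} exp(−H_t^z(α)), with H_t^z(x) = Σ_{J⊆Λ\{t}} Φ_{{t}∪J}(x z_J), satisfies the consistency conditions: for all distinct t,s ∈ Λ, x,u,y,v ∈ X, z ∈ X^{Λ\{t,s}}, q_t^{zy}(x) q_s^{zx}(v) q_t^{zv}(u) q_s^{zu}(y) = q_t^{zy}(u) q_s^{zu}(v) q_t^{zv}(x) q_s^{zx}(y). -/
/-- The one-point Hamiltonian at `t` with boundary condition `z` built from a potential. -/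
noncomputable def Ham {Λ X : Type*} [DecidableEq Λ] [Fintype Λ]
    (Φ : Finset Λ → (Λ → X) → ℝ) (t : Λ) (z : {s : Λ // s ≠ t} → X) (x : X) : ℝ :=
  ∑ J ∈ (Finset.univ.erase t).powerset, Φ (insert t J) (cat t x z)

/-- The Gibbs one-point system built from a potential. -/
noncomputable def gibbsQ {Λ X : Type*} [DecidableEq Λ] [Fintype Λ] [Fintype X]
    (Φ : Finset Λ → (Λ → X) → ℝ) (t : Λ) (z : {s : Λ // s ≠ t} → X) (x : X) : ℝ :=
  Real.exp (-(Ham Φ t z x)) / ∑ α : X, Real.exp (-(Ham Φ t z α))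

open Finset Real

section FourCycle

variable {X : Type*}

lemma add_four_cycle_of_split {Ht Hs A B C : X → X → ℝ}
    (hHt : ∀ a b, Ht a b = A a b + B a b) (hHs : ∀ a b, Hs a b = A a b + C a b)
    (hB : ∀ a b b', B a b = B a b') (hC : ∀ a a' b, C a b = C a' b) (x u y v : X) :
    Ht x y + Hs x v + Ht u v + Hs u y = Ht u y + Hs u v + Ht x v + Hs x y := by
  simp only [hHt, hHs]
  rw [hB x y v, hB u v y, hC x u v, hC u x y]
  ring

lemma exp_div_sum_four_cycle [Fintype X] (Ht Hs : X → X → ℝ) {x u y v : X}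
    (h : Ht x y + Hs x v + Ht u v + Hs u y = Ht u y + Hs u v + Ht x v + Hs x y) :
    (exp (-Ht x y) / ∑ α, exp (-Ht α y)) * (exp (-Hs x v) / ∑ β, exp (-Hs x β))
        * (exp (-Ht u v) / ∑ α, exp (-Ht α v)) * (exp (-Hs u y) / ∑ β, exp (-Hs u β))
      = (exp (-Ht u y) / ∑ α, exp (-Ht α y)) * (exp (-Hs u v) / ∑ β, exp (-Hs u β))
        * (exp (-Ht x v) / ∑ α, exp (-Ht α v)) * (exp (-Hs x y) / ∑ β, exp (-Hs x β)) := by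
  have hexp : exp (-Ht x y) * exp (-Hs x v) * exp (-Ht u v) * exp (-Hs u y)
      = exp (-Ht u y) * exp (-Hs u v) * exp (-Ht x v) * exp (-Hs x y) := by
    rw [← exp_add, ← exp_add, ← exp_add, ← exp_add, ← exp_add, ← exp_add]
    congr 1
    linarith
  simp only [div_mul_div_comm, hexp]
  ring

end FourCycle

lemma cat_catS_eq_cat_catT {Λ X : Type*} [DecidableEq Λ] {t s : Λ} (hts : t ≠ s) (a b : X)
    (z : {r : Λ // r ≠ t ∧ r ≠ s} → X) :
    cat s b (catS t s a z) = cat t a (catT t s b z) := by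
  funext r
  unfold cat catS catT
  by_cases hrt : r = t <;> by_cases hrs : r = s <;> simp_all

section Potential

variable {Λ X : Type*} [DecidableEq Λ] [Fintype Λ] (Φ : Finset Λ → (Λ → X) → ℝ)

noncomputable def pairEnergy (t s : Λ) (w : {r : Λ // r ≠ t} → X) (a : X) : ℝ :=
  ∑ J ∈ ((univ.erase t).erase s).powerset, Φ (insert t (insert s J)) (cat t a w)

noncomputable def restEnergy (t s : Λ) (w : {r : Λ // r ≠ t} → X) (a : X) : ℝ :=
  ∑ J ∈ ((univ.erase t).erase s).powerset, Φ (insert t J) (cat t a w)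

lemma Ham_eq_pairEnergy_add_restEnergy {t s : Λ} (hst : s ≠ t) (w : {r : Λ // r ≠ t} → X)
    (a : X) : Ham Φ t w a = pairEnergy Φ t s w a + restEnergy Φ t s w a := by
  have hs : univ.erase t = insert s ((univ.erase t).erase s) :=
    (insert_erase (mem_erase.mpr ⟨hst, mem_univ s⟩)).symm
  rw [Ham, hs, sum_powerset_insert (notMem_erase _ _), add_comm]
  rfl

lemma pairEnergy_catS_eq_pairEnergy_catT {t s : Λ} (hts : t ≠ s) (a b : X)
    (z : {r : Λ // r ≠ t ∧ r ≠ s} → X) :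
    pairEnergy Φ s t (catS t s a z) b = pairEnergy Φ t s (catT t s b z) a := by
  unfold pairEnergy
  rw [erase_right_comm, cat_catS_eq_cat_catT hts]
  simp only [insert_comm s t]

lemma restEnergy_congr
    (hloc : ∀ V : Finset Λ, ∀ x y : Λ → X, (∀ s ∈ V, x s = y s) → Φ V x = Φ V y)
    {t s : Λ} {w w' : {r : Λ // r ≠ t} → X} (h : ∀ r, r.1 ≠ s → w r = w' r) (a : X) :
    restEnergy Φ t s w a = restEnergy Φ t s w' a := by
  refine sum_congr rfl fun J hJ => hloc _ _ _ fun r hr => ?_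
  obtain rfl | hrJ := mem_insert.mp hr
  · simp [cat]
  · obtain ⟨hrs, hr'⟩ := mem_erase.mp (mem_powerset.mp hJ hrJ)
    obtain ⟨hrt, -⟩ := mem_erase.mp hr'
    simp [cat, hrt, h ⟨r, hrt⟩ hrs]

end Potential

theorem stmt8_general {Λ X : Type*} [DecidableEq Λ] [Fintype Λ] [Fintype X]
    (Φ : Finset Λ → (Λ → X) → ℝ)
    (hloc : ∀ V : Finset Λ, ∀ x y : Λ → X, (∀ s ∈ V, x s = y s) → Φ V x = Φ V y) :
    ∀ t s : Λ, t ≠ s → ∀ x u y v : X, ∀ z : {r : Λ // r ≠ t ∧ r ≠ s} → X,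
      gibbsQ Φ t (catT t s y z) x * gibbsQ Φ s (catS t s x z) v
          * gibbsQ Φ t (catT t s v z) u * gibbsQ Φ s (catS t s u z) y
        = gibbsQ Φ t (catT t s y z) u * gibbsQ Φ s (catS t s u z) v
            * gibbsQ Φ t (catT t s v z) x * gibbsQ Φ s (catS t s x z) y := by
  intro t s hts x u y v z
  have hHt : ∀ a b, Ham Φ t (catT t s b z) a
      = pairEnergy Φ t s (catT t s b z) a + restEnergy Φ t s (catT t s b z) a :=
    fun a b => Ham_eq_pairEnergy_add_restEnergy Φ hts.symm _ a
  have hHs : ∀ a b, Ham Φ s (catS t s a z) b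
      = pairEnergy Φ t s (catT t s b z) a + restEnergy Φ s t (catS t s a z) b := fun a b => by
    rw [Ham_eq_pairEnergy_add_restEnergy Φ hts, pairEnergy_catS_eq_pairEnergy_catT Φ hts]
  have hB : ∀ a b b', restEnergy Φ t s (catT t s b z) a = restEnergy Φ t s (catT t s b' z) a :=
    fun a b b' => restEnergy_congr Φ hloc (fun r hr => by simp [catT, hr]) a
  have hC : ∀ a a' b, restEnergy Φ s t (catS t s a z) b = restEnergy Φ s t (catS t s a' z) b :=
    fun a a' b => restEnergy_congr Φ hloc (fun r hr => by simp [catS, hr]) b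
  exact exp_div_sum_four_cycle (fun a b => Ham Φ t (catT t s b z) a)
    (fun a b => Ham Φ s (catS t s a z) b) (add_four_cycle_of_split hHt hHs hB hC x u y v)

theorem stmt8 {Λ X : Type*} [DecidableEq Λ] [Fintype Λ] [Fintype X] [Nonempty X]
    (Φ : Finset Λ → (Λ → X) → ℝ)
    (hloc : ∀ V : Finset Λ, ∀ x y : Λ → X, (∀ s ∈ V, x s = y s) → Φ V x = Φ V y) :
    ∀ t s : Λ, t ≠ s → ∀ x u y v : X, ∀ z : {r : Λ // r ≠ t ∧ r ≠ s} → X,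
      gibbsQ Φ t (catT t s y z) x * gibbsQ Φ s (catS t s x z) v
          * gibbsQ Φ t (catT t s v z) u * gibbsQ Φ s (catS t s u z) y
        = gibbsQ Φ t (catT t s y z) u * gibbsQ Φ s (catS t s u z) v
            * gibbsQ Φ t (catT t s v z) x * gibbsQ Φ s (catS t s x z) y :=
  stmt8_general Φ hloc
end

section
/- Let Q = {q_t^z} be a family of strictly positive one-point probability distributions on X indexed by t ∈ Λ and boundary conditions z ∈ X^{Λ\{t}} (Λ, X finite). Then Q satisfies the consistency conditions (2) if and only if the family Δ_t^z(x,u) := ln(q_t^z(x)/q_t^z(u)) is a one-point transition energy field, i.e., satisfies Δ_t^z(x,u) = Δ_t^z(x,α) + Δ_t^z(α,u) and Δ_t^{zy}(x,u) + Δ_s^{zu}(y,v) = Δ_s^{zx}(y,v) + Δ_t^{zv}(x,u) for all distinct t,s, all x,u,α,y,v ∈ X, z ∈ X^{Λ\{t,s}}. -/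
namespace Real

lemma log_div_eq_log_div_add_log_div {a b c : ℝ} (ha : a ≠ 0) (hb : b ≠ 0) (hc : c ≠ 0) :
    log (a / b) = log (a / c) + log (c / b) := by
  rw [← log_mul (div_ne_zero ha hc) (div_ne_zero hc hb), div_mul_div_cancel₀ hc]

lemma log_div_add_log_div_eq_iff {a a' b b' c c' d d' : ℝ} (ha : 0 < a) (ha' : 0 < a')
    (hb : 0 < b) (hb' : 0 < b') (hc : 0 < c) (hc' : 0 < c') (hd : 0 < d) (hd' : 0 < d') :
    log (a / a') + log (b / b') = log (c / c') + log (d / d') ↔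
      a * b * (c' * d') = c * d * (a' * b') := by
  rw [← log_mul (by positivity) (by positivity), ← log_mul (by positivity) (by positivity),
    log_injOn_pos.eq_iff (Set.mem_Ioi.mpr (by positivity)) (Set.mem_Ioi.mpr (by positivity)),
    div_mul_div_comm, div_mul_div_comm, div_eq_div_iff (by positivity) (by positivity)]

end Real

theorem stmt10_general {Λ X : Type*} [DecidableEq Λ]
    (q : ∀ t : Λ, ({s : Λ // s ≠ t} → X) → X → ℝ)
    (hqpos : ∀ t z x, 0 < q t z x)
    (Δ : ∀ t : Λ, ({s : Λ // s ≠ t} → X) → X → X → ℝ)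
    (hΔ : ∀ t z x u, Δ t z x u = Real.log (q t z x / q t z u)) :
    (∀ t s : Λ, t ≠ s → ∀ x u y v : X, ∀ z : {r : Λ // r ≠ t ∧ r ≠ s} → X,
      q t (catT t s y z) x * q s (catS t s x z) v * q t (catT t s v z) u * q s (catS t s u z) y
        = q t (catT t s y z) u * q s (catS t s u z) v * q t (catT t s v z) x
            * q s (catS t s x z) y)
    ↔
    ((∀ t : Λ, ∀ z : {s : Λ // s ≠ t} → X, ∀ x u α : X,
        Δ t z x u = Δ t z x α + Δ t z α u) ∧
     (∀ t s : Λ, t ≠ s → ∀ x u y v : X, ∀ z : {r : Λ // r ≠ t ∧ r ≠ s} → X,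
        Δ t (catT t s y z) x u + Δ s (catS t s u z) y v
          = Δ s (catS t s x z) y v + Δ t (catT t s v z) x u)) := by
  have hsquare : ∀ t s, t ≠ s → ∀ x u y v z,
      Δ t (catT t s y z) x u + Δ s (catS t s u z) y v
          = Δ s (catS t s x z) y v + Δ t (catT t s v z) x u ↔
        q t (catT t s y z) x * q s (catS t s u z) y * (q s (catS t s x z) v * q t (catT t s v z) u)
          = q s (catS t s x z) y * q t (catT t s v z) x
            * (q t (catT t s y z) u * q s (catS t s u z) v) := fun t s _ x u y v z => by
    simp only [hΔ]
    exact Real.log_div_add_log_div_eq_iff (hqpos ..) (hqpos ..) (hqpos ..) (hqpos ..)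
      (hqpos ..) (hqpos ..) (hqpos ..) (hqpos ..)
  constructor
  · refine fun hcons => ⟨fun t z x u α => ?_, fun t s hts x u y v z => ?_⟩
    · simp only [hΔ]
      exact Real.log_div_eq_log_div_add_log_div (hqpos ..).ne' (hqpos ..).ne' (hqpos ..).ne'
    · rw [hsquare t s hts]
      linear_combination hcons t s hts x u y v z
  · rintro ⟨-, hsq⟩ t s hts x u y v z
    linear_combination (hsquare t s hts x u y v z).mp (hsq t s hts x u y v z)

theorem stmt10 {Λ X : Type*} [DecidableEq Λ] [Fintype Λ] [Fintype X]
    (q : ∀ t : Λ, ({s : Λ // s ≠ t} → X) → X → ℝ)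
    (hqpos : ∀ t z x, 0 < q t z x) (hqsum : ∀ t z, ∑ x : X, q t z x = 1)
    (Δ : ∀ t : Λ, ({s : Λ // s ≠ t} → X) → X → X → ℝ)
    (hΔ : ∀ t z x u, Δ t z x u = Real.log (q t z x / q t z u)) :
    (∀ t s : Λ, t ≠ s → ∀ x u y v : X, ∀ z : {r : Λ // r ≠ t ∧ r ≠ s} → X,
      q t (catT t s y z) x * q s (catS t s x z) v * q t (catT t s v z) u * q s (catS t s u z) y
        = q t (catT t s y z) u * q s (catS t s u z) v * q t (catT t s v z) x
            * q s (catS t s x z) y)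
    ↔
    ((∀ t : Λ, ∀ z : {s : Λ // s ≠ t} → X, ∀ x u α : X,
        Δ t z x u = Δ t z x α + Δ t z α u) ∧
     (∀ t s : Λ, t ≠ s → ∀ x u y v : X, ∀ z : {r : Λ // r ≠ t ∧ r ≠ s} → X,
        Δ t (catT t s y z) x u + Δ s (catS t s u z) y v
          = Δ s (catS t s x z) y v + Δ t (catT t s v z) x u)) :=
  stmt10_general q hqpos Δ hΔ
end

section
/- Let Δ₁ = {Δ_t^z} be a one-point transition energy field on finite Λ with finite state space X. Define q_t^z(x) = exp(Δ_t^z(x,u)) / Σ_{α∈X} exp(Δ_t^z(α,u)) for a fixed u ∈ X. Then: (a) q_t^z(x) does not depend on the choice of u; (b) each q_t^z is a strictly positive probability distribution on X; and (c) the family {q_t^z} satisfies the consistency conditions (2). -/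
/-- The Gibbs one-point distribution built from a transition energy field, with
reference configuration `u`. -/
noncomputable def tefQ {Λ X : Type*} [Fintype X]
    (Δ : ∀ t : Λ, ({s : Λ // s ≠ t} → X) → X → X → ℝ)
    (t : Λ) (z : {s : Λ // s ≠ t} → X) (u x : X) : ℝ :=
  Real.exp (Δ t z x u) / ∑ α : X, Real.exp (Δ t z α u)

/-
By the cocycle identity `exp Δ(x, u) = exp Δ(x, u') · exp Δ(u', u)`, so changing the reference point
rescales numerator and denominator of `q_t^z(x)` by the same factor. For the same reason
`q(x) = q(u) · exp Δ(x, u)`; substituting this into both sides of the consistency condition and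
cancelling the common factor `q_t^y(u) q_s^x(y) q_t^v(u) q_s^u(y)` leaves the exchange identity,
rewritten with `Δ_s(v, y) = -Δ_s(y, v)`.
-/

open Real

section Cocycle

variable {X : Type*} {f : X → X → ℝ}

theorem apply_self_eq_zero_of_cocycle (hf : ∀ x u α, f x u = f x α + f α u) (a : X) :
    f a a = 0 := by
  linarith [hf a a a]

theorem apply_eq_neg_apply_of_cocycle (hf : ∀ x u α, f x u = f x α + f α u) (a b : X) :
    f a b = -f b a := by
  linarith [hf a a b, apply_self_eq_zero_of_cocycle hf a]

end Cocycle

section Gibbs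

variable {X : Type*} [Fintype X]

theorem sum_exp_pos [Nonempty X] (g : X → ℝ) : 0 < ∑ α, exp (g α) :=
  Finset.sum_pos (fun _ _ => exp_pos _) Finset.univ_nonempty

theorem exp_div_sum_exp_pos [Nonempty X] (g : X → ℝ) (x : X) :
    0 < exp (g x) / ∑ α, exp (g α) :=
  div_pos (exp_pos _) (sum_exp_pos g)

theorem sum_exp_div_sum_exp [Nonempty X] (g : X → ℝ) :
    ∑ x, exp (g x) / ∑ α, exp (g α) = 1 := by
  rw [← Finset.sum_div, div_self (sum_exp_pos g).ne']

variable {Λ : Type*} {Δ : ∀ t : Λ, ({s : Λ // s ≠ t} → X) → X → X → ℝ}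
  {t : Λ} {z : {s : Λ // s ≠ t} → X}

theorem tefQ_pos [Nonempty X] (u x : X) : 0 < tefQ Δ t z u x :=
  exp_div_sum_exp_pos (fun α => Δ t z α u) x

theorem sum_tefQ [Nonempty X] (u : X) : ∑ x, tefQ Δ t z u x = 1 :=
  sum_exp_div_sum_exp (fun α => Δ t z α u)

theorem tefQ_eq_tefQ_of_cocycle (hΔ : ∀ x u α, Δ t z x u = Δ t z x α + Δ t z α u)
    (u u' x : X) : tefQ Δ t z u x = tefQ Δ t z u' x := by
  have hexp : ∀ α, exp (Δ t z α u) = exp (Δ t z α u') * exp (Δ t z u' u) := fun α => by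
    rw [← exp_add, ← hΔ]
  have hsum : ∑ α, exp (Δ t z α u) = (∑ α, exp (Δ t z α u')) * exp (Δ t z u' u) := by
    rw [Finset.sum_mul]
    exact Finset.sum_congr rfl fun α _ => hexp α
  rw [tefQ, tefQ, hexp x, hsum, mul_div_mul_right _ _ (exp_ne_zero _)]

theorem tefQ_eq_tefQ_mul_exp_of_cocycle (hΔ : ∀ x u α, Δ t z x u = Δ t z x α + Δ t z α u)
    (u₀ x u : X) : tefQ Δ t z u₀ x = tefQ Δ t z u₀ u * exp (Δ t z x u) := by
  rw [tefQ, tefQ, hΔ x u₀ u, add_comm, exp_add, div_mul_eq_mul_div]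

end Gibbs

theorem tefQ_consistency {Λ X : Type*} [DecidableEq Λ] [Fintype X]
    {Δ : ∀ t : Λ, ({s : Λ // s ≠ t} → X) → X → X → ℝ}
    (hadd : ∀ t : Λ, ∀ z : {s : Λ // s ≠ t} → X, ∀ x u α : X,
      Δ t z x u = Δ t z x α + Δ t z α u)
    {t s : Λ} {x u y v : X} {z : {r : Λ // r ≠ t ∧ r ≠ s} → X}
    (hexch : Δ t (catT t s y z) x u + Δ s (catS t s u z) y v
        = Δ s (catS t s x z) y v + Δ t (catT t s v z) x u) (u₀ : X) :
    tefQ Δ t (catT t s y z) u₀ x * tefQ Δ s (catS t s x z) u₀ v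
        * tefQ Δ t (catT t s v z) u₀ u * tefQ Δ s (catS t s u z) u₀ y
      = tefQ Δ t (catT t s y z) u₀ u * tefQ Δ s (catS t s u z) u₀ v
          * tefQ Δ t (catT t s v z) u₀ x * tefQ Δ s (catS t s x z) u₀ y := by
  have hswap : Δ t (catT t s y z) x u + Δ s (catS t s x z) v y
      = Δ t (catT t s v z) x u + Δ s (catS t s u z) v y := by
    rw [apply_eq_neg_apply_of_cocycle (hadd s _) v y,
      apply_eq_neg_apply_of_cocycle (hadd s (catS t s u z)) v y]
    linarith
  have hexp := congrArg exp hswap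
  rw [exp_add, exp_add] at hexp
  rw [tefQ_eq_tefQ_mul_exp_of_cocycle (hadd t (catT t s y z)) u₀ x u,
    tefQ_eq_tefQ_mul_exp_of_cocycle (hadd s (catS t s x z)) u₀ v y,
    tefQ_eq_tefQ_mul_exp_of_cocycle (hadd t (catT t s v z)) u₀ x u,
    tefQ_eq_tefQ_mul_exp_of_cocycle (hadd s (catS t s u z)) u₀ v y]
  linear_combination (tefQ Δ t (catT t s y z) u₀ u * tefQ Δ s (catS t s x z) u₀ y
    * tefQ Δ t (catT t s v z) u₀ u * tefQ Δ s (catS t s u z) u₀ y) * hexp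

theorem stmt11_general {Λ X : Type*} [DecidableEq Λ] [Fintype X] [Nonempty X]
    (Δ : ∀ t : Λ, ({s : Λ // s ≠ t} → X) → X → X → ℝ)
    (hadd : ∀ t : Λ, ∀ z : {s : Λ // s ≠ t} → X, ∀ x u α : X,
      Δ t z x u = Δ t z x α + Δ t z α u)
    (hexch : ∀ t s : Λ, t ≠ s → ∀ x u y v : X, ∀ z : {r : Λ // r ≠ t ∧ r ≠ s} → X,
      Δ t (catT t s y z) x u + Δ s (catS t s u z) y v
        = Δ s (catS t s x z) y v + Δ t (catT t s v z) x u) :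
    (∀ t z x u u', tefQ Δ t z u x = tefQ Δ t z u' x) ∧
    (∀ t z u, (∀ x, 0 < tefQ Δ t z u x) ∧ ∑ x : X, tefQ Δ t z u x = 1) ∧
    (∀ u₀ : X, ∀ t s : Λ, t ≠ s → ∀ x u y v : X, ∀ z : {r : Λ // r ≠ t ∧ r ≠ s} → X,
      tefQ Δ t (catT t s y z) u₀ x * tefQ Δ s (catS t s x z) u₀ v
          * tefQ Δ t (catT t s v z) u₀ u * tefQ Δ s (catS t s u z) u₀ y
        = tefQ Δ t (catT t s y z) u₀ u * tefQ Δ s (catS t s u z) u₀ v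
            * tefQ Δ t (catT t s v z) u₀ x * tefQ Δ s (catS t s x z) u₀ y) := by
  refine ⟨fun t z x u u' => tefQ_eq_tefQ_of_cocycle (hadd t z) u u' x,
    fun t z u => ⟨fun x => tefQ_pos u x, sum_tefQ u⟩, ?_⟩
  intro u₀ t s hts x u y v z
  exact tefQ_consistency hadd (hexch t s hts x u y v z) u₀

theorem stmt11 {Λ X : Type*} [DecidableEq Λ] [Fintype Λ] [Fintype X] [Nonempty X]
    (Δ : ∀ t : Λ, ({s : Λ // s ≠ t} → X) → X → X → ℝ)
    (hadd : ∀ t : Λ, ∀ z : {s : Λ // s ≠ t} → X, ∀ x u α : X,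
      Δ t z x u = Δ t z x α + Δ t z α u)
    (hexch : ∀ t s : Λ, t ≠ s → ∀ x u y v : X, ∀ z : {r : Λ // r ≠ t ∧ r ≠ s} → X,
      Δ t (catT t s y z) x u + Δ s (catS t s u z) y v
        = Δ s (catS t s x z) y v + Δ t (catT t s v z) x u) :
    (∀ t z x u u', tefQ Δ t z u x = tefQ Δ t z u' x) ∧
    (∀ t z u, (∀ x, 0 < tefQ Δ t z u x) ∧ ∑ x : X, tefQ Δ t z u x = 1) ∧
    (∀ u₀ : X, ∀ t s : Λ, t ≠ s → ∀ x u y v : X, ∀ z : {r : Λ // r ≠ t ∧ r ≠ s} → X,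
      tefQ Δ t (catT t s y z) u₀ x * tefQ Δ s (catS t s x z) u₀ v
          * tefQ Δ t (catT t s v z) u₀ u * tefQ Δ s (catS t s u z) u₀ y
        = tefQ Δ t (catT t s y z) u₀ u * tefQ Δ s (catS t s u z) u₀ v
            * tefQ Δ t (catT t s v z) u₀ x * tefQ Δ s (catS t s x z) u₀ y) :=
  stmt11_general Δ hadd hexch
end

section
/- If Δ and Δ' are two one-point transition energy fields on finite Λ, X that generate the same Gibbs one-point system, i.e., exp(Δ_t^z(x,u))/Σ_α exp(Δ_t^z(α,u)) = exp(Δ'_t^z(x,u))/Σ_α exp(Δ'_t^z(α,u)) for all t, z, x (any fixed u), then Δ = Δ' (the transition energy field is uniquely determined by the consistent system). -/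
theorem stmt12 {Λ X : Type*} [DecidableEq Λ] [Fintype Λ] [Fintype X] [Nonempty X]
    (Δ Δ' : ∀ t : Λ, ({s : Λ // s ≠ t} → X) → X → X → ℝ)
    (hadd : ∀ t : Λ, ∀ z : {s : Λ // s ≠ t} → X, ∀ x u α : X,
      Δ t z x u = Δ t z x α + Δ t z α u)
    (hexch : ∀ t s : Λ, t ≠ s → ∀ x u y v : X, ∀ z : {r : Λ // r ≠ t ∧ r ≠ s} → X,
      Δ t (catT t s y z) x u + Δ s (catS t s u z) y v
        = Δ s (catS t s x z) y v + Δ t (catT t s v z) x u)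
    (hadd' : ∀ t : Λ, ∀ z : {s : Λ // s ≠ t} → X, ∀ x u α : X,
      Δ' t z x u = Δ' t z x α + Δ' t z α u)
    (hexch' : ∀ t s : Λ, t ≠ s → ∀ x u y v : X, ∀ z : {r : Λ // r ≠ t ∧ r ≠ s} → X,
      Δ' t (catT t s y z) x u + Δ' s (catS t s u z) y v
        = Δ' s (catS t s x z) y v + Δ' t (catT t s v z) x u)
    (hsame : ∀ t : Λ, ∀ z : {s : Λ // s ≠ t} → X, ∀ x u : X,
      Real.exp (Δ t z x u) / ∑ α : X, Real.exp (Δ t z α u)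
        = Real.exp (Δ' t z x u) / ∑ α : X, Real.exp (Δ' t z α u)) :
    Δ = Δ' := by
  funext t z x u
  have h0 : Δ t z u u = 0 := by have := hadd t z u u u; linarith
  have h0' : Δ' t z u u = 0 := by have := hadd' t z u u u; linarith
  have hSpos : (0:ℝ) < ∑ α : X, Real.exp (Δ t z α u) :=
    Finset.sum_pos (fun a _ => Real.exp_pos _) Finset.univ_nonempty
  have hSpos' : (0:ℝ) < ∑ α : X, Real.exp (Δ' t z α u) :=
    Finset.sum_pos (fun a _ => Real.exp_pos _) Finset.univ_nonempty
  have hS : (∑ α : X, Real.exp (Δ t z α u)) = ∑ α : X, Real.exp (Δ' t z α u) := by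
    have h := hsame t z u u
    rw [h0, h0'] at h
    field_simp at h
    linarith
  have h := hsame t z x u
  rw [← hS] at h
  field_simp at h
  exact Real.exp_injective h
end

section
/- Every strictly positive probability distribution P on X^Λ (Λ, X finite) is Gibbsian: the family Δ_t^z(x,u) := ln(P(xz)/P(uz)) is a one-point transition energy field, and the one-point conditional probabilities of P satisfy Q_t^z(x) = exp(Δ_t^z(x,u)) / Σ_{α∈X} exp(Δ_t^z(α,u)) for every u ∈ X. -/
theorem cat_catT_eq_cat_catS {Λ X : Type*} [DecidableEq Λ] {t s : Λ} (hts : t ≠ s) (x y : X)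
    (z : {r : Λ // r ≠ t ∧ r ≠ s} → X) :
    cat t x (catT t s y z) = cat s y (catS t s x z) := by
  funext r
  by_cases hrt : r = t
  · subst hrt
    simp [cat, catS, hts]
  · by_cases hrs : r = s
    · subst hrs
      simp [cat, catT, Ne.symm hts]
    · simp [cat, catT, catS, hrt, hrs]

theorem div_sum_eq_exp_log_div_div_sum {ι : Type*} [Fintype ι] {w : ι → ℝ}
    (hw : ∀ a, 0 < w a) (x u : ι) :
    w x / ∑ a, w a =
      Real.exp (Real.log (w x / w u)) / ∑ a, Real.exp (Real.log (w a / w u)) := by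
  simp only [Real.exp_log (div_pos (hw _) (hw u))]
  rw [← Finset.sum_div, div_div_div_cancel_right₀ (hw u).ne']

theorem stmt13_general {Λ X : Type*} [DecidableEq Λ] [Fintype X]
    (P : (Λ → X) → ℝ) (hpos : ∀ σ, 0 < P σ)
    (Q : ∀ t : Λ, ({s : Λ // s ≠ t} → X) → X → ℝ)
    (hQ : ∀ t z x, Q t z x = P (cat t x z) / ∑ v : X, P (cat t v z))
    (Δ : ∀ t : Λ, ({s : Λ // s ≠ t} → X) → X → X → ℝ)
    (hΔ : ∀ t z x u, Δ t z x u = Real.log (P (cat t x z) / P (cat t u z))) :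
    (∀ t : Λ, ∀ z : {s : Λ // s ≠ t} → X, ∀ x u α : X,
        Δ t z x u = Δ t z x α + Δ t z α u) ∧
    (∀ t s : Λ, t ≠ s → ∀ x u y v : X, ∀ z : {r : Λ // r ≠ t ∧ r ≠ s} → X,
        Δ t (catT t s y z) x u + Δ s (catS t s u z) y v
          = Δ s (catS t s x z) y v + Δ t (catT t s v z) x u) ∧
    (∀ t z x, ∀ u : X,
        Q t z x = Real.exp (Δ t z x u) / ∑ α : X, Real.exp (Δ t z α u)) := by
  have hΔ_sub : ∀ t z x u, Δ t z x u = Real.log (P (cat t x z)) - Real.log (P (cat t u z)) :=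
    fun t z x u => by rw [hΔ, Real.log_div (hpos _).ne' (hpos _).ne']
  refine ⟨fun t z x u α => ?_, fun t s hts x u y v z => ?_, fun t z x u => ?_⟩
  · simp only [hΔ_sub]
    ring
  · simp only [hΔ_sub, cat_catT_eq_cat_catS hts]
    ring
  · simp only [hQ, hΔ]
    exact div_sum_eq_exp_log_div_div_sum (w := fun a => P (cat t a z)) (fun a => hpos _) x u

theorem stmt13 {Λ X : Type*} [DecidableEq Λ] [Fintype Λ] [Fintype X]
    [Nonempty Λ] [Nonempty X]
    (P : (Λ → X) → ℝ) (hpos : ∀ σ, 0 < P σ) (hsum : ∑ σ, P σ = 1)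
    (Q : ∀ t : Λ, ({s : Λ // s ≠ t} → X) → X → ℝ)
    (hQ : ∀ t z x, Q t z x = P (cat t x z) / ∑ v : X, P (cat t v z))
    (Δ : ∀ t : Λ, ({s : Λ // s ≠ t} → X) → X → X → ℝ)
    (hΔ : ∀ t z x u, Δ t z x u = Real.log (P (cat t x z) / P (cat t u z))) :
    (∀ t : Λ, ∀ z : {s : Λ // s ≠ t} → X, ∀ x u α : X,
        Δ t z x u = Δ t z x α + Δ t z α u) ∧
    (∀ t s : Λ, t ≠ s → ∀ x u y v : X, ∀ z : {r : Λ // r ≠ t ∧ r ≠ s} → X,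
        Δ t (catT t s y z) x u + Δ s (catS t s u z) y v
          = Δ s (catS t s x z) y v + Δ t (catT t s v z) x u) ∧
    (∀ t z x, ∀ u : X,
        Q t z x = Real.exp (Δ t z x u) / ∑ α : X, Real.exp (Δ t z α u)) :=
  stmt13_general P hpos Q hQ Δ hΔ
end

section
/- Let P be a strictly positive probability on X^Λ with one-point conditional distributions Q_t^z, Λ = {t₁,...,tₙ}. Suppose each Q_t^z has Gibbs form Q_t^z(x) = exp(−H_t^z(x))/Σ_α exp(−H_t^z(α)) where H_t^z(x) = H_Λ(xz) − H_{Λ\{t}}(z) for some functions H_Λ : X^Λ → ℝ and H_{Λ\{t}} : X^{Λ\{t}} → ℝ. Then the telescoping identity Σ_{j=1}^n (H_{t_j}^{(αx)_j}(x_j) − H_{t_j}^{(αx)_j}(α_j)) = H_Λ(x) − H_Λ(α) holds for all x, α ∈ X^Λ, and consequently P(x) = exp(−H_Λ(x)) / Σ_{α∈X^Λ} exp(−H_Λ(α)). -/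
open Finset

section Splice

variable {n : ℕ} {X : Type*}

def splice (α x : Fin n → X) (k : ℕ) : Fin n → X :=
  fun i => if (i : ℕ) < k then α i else x i

@[simp]
lemma splice_zero (α x : Fin n → X) : splice α x 0 = x := by
  funext i; simp [splice]

@[simp]
lemma splice_last (α x : Fin n → X) : splice α x n = α := by
  funext i; simp [splice, i.isLt]

lemma cat_mix_eq_splice (j : Fin n) (α x : Fin n → X) : cat j (x j) (mix j α x) = splice α x j := by
  funext i
  by_cases h : i = j
  · subst h; simp [cat, splice]
  · simp only [cat, mix, splice, dif_neg h, Fin.lt_def]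

lemma cat_mix_eq_splice_succ (j : Fin n) (α x : Fin n → X) :
    cat j (α j) (mix j α x) = splice α x (j + 1) := by
  funext i
  by_cases h : i = j
  · subst h; simp [cat, splice]
  · have h' : (i : ℕ) ≠ j := Fin.val_ne_of_ne h
    simp only [cat, mix, splice, dif_neg h, Fin.lt_def]
    split_ifs <;> first | rfl | omega

lemma sum_sub_cat_mix {G : Type*} [AddCommGroup G] (F : (Fin n → X) → G) (x α : Fin n → X) :
    ∑ j : Fin n, (F (cat j (x j) (mix j α x)) - F (cat j (α j) (mix j α x))) = F x - F α := by
  simp only [cat_mix_eq_splice, cat_mix_eq_splice_succ]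
  rw [Fin.sum_univ_eq_sum_range (fun k => F (splice α x k) - F (splice α x (k + 1))),
    sum_range_sub', splice_zero, splice_last]

end Splice

lemma mul_exp_eq_of_div_sum_eq {ι : Type*} [Fintype ι] {p e : ι → ℝ} (hp : ∀ i, 0 < p i) (c : ℝ)
    (h : ∀ i, p i / ∑ j, p j = Real.exp (-(e i - c)) / ∑ j, Real.exp (-(e j - c))) (i k : ι) :
    p i * Real.exp (e i) = p k * Real.exp (e k) := by
  have hS : ∑ j, p j ≠ 0 := (sum_pos (fun j _ => hp j) ⟨i, mem_univ i⟩).ne'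
  have hconst : ∀ i, p i * Real.exp (e i)
      = (∑ j, p j) / (∑ j, Real.exp (-(e j - c))) * Real.exp c := fun i => by
    have hexp : Real.exp (-(e i - c)) * Real.exp (e i) = Real.exp c := by
      rw [← Real.exp_add, neg_sub, sub_add_cancel]
    rw [← div_mul_cancel₀ (p i) hS, h i, ← hexp]
    ring
  rw [hconst i, hconst k]

lemma eq_exp_neg_div_sum_of_mul_exp_const {ι : Type*} [Fintype ι] (P E : ι → ℝ)
    (hsum : ∑ σ, P σ = 1) (hconst : ∀ σ τ, P σ * Real.exp (E σ) = P τ * Real.exp (E τ))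
    (x : ι) : P x = Real.exp (-E x) / ∑ α, Real.exp (-E α) := by
  have hP : ∀ α, P α = P x * Real.exp (E x) * Real.exp (-E α) := fun α => by
    rw [← hconst α x, mul_assoc, ← Real.exp_add, add_neg_cancel, Real.exp_zero, mul_one]
  have hZ : P x * Real.exp (E x) * ∑ α, Real.exp (-E α) = 1 := by
    rw [mul_sum, ← hsum]; exact sum_congr rfl fun α _ => (hP α).symm
  rw [eq_div_iff (right_ne_zero_of_mul_eq_one hZ)]
  nth_rewrite 1 [hP x]
  linear_combination Real.exp (-E x) * hZ

theorem stmt14_general {n : ℕ} {X : Type*} [Fintype X]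
    (P : (Fin n → X) → ℝ) (hpos : ∀ σ, 0 < P σ) (hsum : ∑ σ, P σ = 1)
    (Q : ∀ j : Fin n, ({i : Fin n // i ≠ j} → X) → X → ℝ)
    (hQ : ∀ j z x, Q j z x = P (cat j x z) / ∑ v : X, P (cat j v z))
    (HΛ : (Fin n → X) → ℝ)
    (Hrest : ∀ j : Fin n, ({i : Fin n // i ≠ j} → X) → ℝ)
    (H : ∀ j : Fin n, ({i : Fin n // i ≠ j} → X) → X → ℝ)
    (hH : ∀ j z x, H j z x = HΛ (cat j x z) - Hrest j z)
    (hGibbs : ∀ j z x, Q j z x = Real.exp (-(H j z x)) / ∑ α : X, Real.exp (-(H j z α))) :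
    (∀ x α : Fin n → X,
      (∑ j : Fin n, (H j (mix j α x) (x j) - H j (mix j α x) (α j))) = HΛ x - HΛ α) ∧
    (∀ x : Fin n → X,
      P x = Real.exp (-(HΛ x)) / ∑ α : Fin n → X, Real.exp (-(HΛ α))) := by
  refine ⟨fun x α => ?_, ?_⟩
  · simp only [hH, sub_sub_sub_cancel_right]
    exact sum_sub_cat_mix HΛ x α
  have hsite : ∀ j z x y, P (cat j x z) * Real.exp (HΛ (cat j x z))
      = P (cat j y z) * Real.exp (HΛ (cat j y z)) := fun j z =>
    mul_exp_eq_of_div_sum_eq (fun _ => hpos _) (Hrest j z) fun x => by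
      simpa only [hQ, hH] using hGibbs j z x
  have hconst : ∀ σ τ, P σ * Real.exp (HΛ σ) = P τ * Real.exp (HΛ τ) := fun σ τ => by
    rw [← sub_eq_zero, ← sum_sub_cat_mix (fun σ => P σ * Real.exp (HΛ σ))]
    exact sum_eq_zero fun j _ => sub_eq_zero.mpr (hsite _ _ _ _)
  exact eq_exp_neg_div_sum_of_mul_exp_const P HΛ hsum hconst

theorem stmt14 {n : ℕ} {X : Type*} [Fintype X] [Nonempty X]
    (P : (Fin n → X) → ℝ) (hpos : ∀ σ, 0 < P σ) (hsum : ∑ σ, P σ = 1)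
    (Q : ∀ j : Fin n, ({i : Fin n // i ≠ j} → X) → X → ℝ)
    (hQ : ∀ j z x, Q j z x = P (cat j x z) / ∑ v : X, P (cat j v z))
    (HΛ : (Fin n → X) → ℝ)
    (Hrest : ∀ j : Fin n, ({i : Fin n // i ≠ j} → X) → ℝ)
    (H : ∀ j : Fin n, ({i : Fin n // i ≠ j} → X) → X → ℝ)
    (hH : ∀ j z x, H j z x = HΛ (cat j x z) - Hrest j z)
    (hGibbs : ∀ j z x, Q j z x = Real.exp (-(H j z x)) / ∑ α : X, Real.exp (-(H j z α))) :
    (∀ x α : Fin n → X,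
      (∑ j : Fin n, (H j (mix j α x) (x j) - H j (mix j α x) (α j))) = HΛ x - HΛ α) ∧
    (∀ x : Fin n → X,
      P x = Real.exp (-(HΛ x)) / ∑ α : Fin n → X, Real.exp (-(HΛ α))) :=
  stmt14_general P hpos hsum Q hQ HΛ Hrest H hH hGibbs
end

section
/- Let Λ, X be finite, ∂ a neighborhood system on Λ, and Φ = {Φ_V} a pair nearest-neighbor potential (Φ_{{t}∪V} ≡ 0 unless V ⊆ ∂t). Define Δ_t^z(x,u) = Σ_{∅≠J⊆Λ\{t}} (Φ_{{t}∪J}(u z_J) − Φ_{{t}∪J}(x z_J)) + Φ_{{t}}(u) − Φ_{{t}}(x). Then Δ satisfies the Markov locality condition: Δ_t^{z}(x,u) = Δ_t^{z'}(x,u) whenever z, z' ∈ X^{Λ\{t}} agree on ∂t. Consequently, the Gibbs random field with potential Φ is Markov with respect to ∂. -/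
/-! A term `Φ_{{t} ∪ J}` with `t ∉ J` vanishes unless `J ⊆ ∂t`, and when `J ⊆ ∂t` it only reads
the configuration on `{t} ∪ ∂t`. Hence every summand of `Δ_t^z` and of the one-point energy
`H_t^z` depends on `z` only through `z_{∂t}`, and so do the Gibbs conditionals `q_t^z`. -/

section

variable {Λ X : Type*} [DecidableEq Λ]

theorem cat_eq_of_mem_insert {t : Λ} {N J : Finset Λ} {z z' : {s : Λ // s ≠ t} → X}
    (hzz : ∀ s : {s : Λ // s ≠ t}, s.1 ∈ N → z s = z' s) (hJ : J ⊆ N) (x : X) :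
    ∀ s ∈ insert t J, cat t x z s = cat t x z' s := by
  intro s hs
  by_cases h : s = t
  · simp [cat, h]
  · simp only [cat, dif_neg h]
    exact hzz ⟨s, h⟩ (hJ ((Finset.mem_insert.mp hs).resolve_left h))

theorem potential_cat_eq_of_eq_on_nbhd (nbhd : Λ → Finset Λ) (Φ : Finset Λ → (Λ → X) → ℝ)
    (hloc : ∀ V : Finset Λ, ∀ x y : Λ → X, (∀ s ∈ V, x s = y s) → Φ V x = Φ V y)
    (hpair : ∀ t : Λ, ∀ V : Finset Λ, t ∉ V → ¬ V ⊆ nbhd t →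
      ∀ x : Λ → X, Φ (insert t V) x = 0)
    {t : Λ} {z z' : {s : Λ // s ≠ t} → X}
    (hzz : ∀ s : {s : Λ // s ≠ t}, s.1 ∈ nbhd t → z s = z' s)
    (x : X) {J : Finset Λ} (htJ : t ∉ J) :
    Φ (insert t J) (cat t x z) = Φ (insert t J) (cat t x z') := by
  by_cases hJ : J ⊆ nbhd t
  · exact hloc _ _ _ (cat_eq_of_mem_insert hzz hJ x)
  · rw [hpair t J htJ hJ, hpair t J htJ hJ]

theorem notMem_of_mem_powerset_erase [Fintype Λ] {t : Λ} {J : Finset Λ}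
    (hJ : J ∈ (Finset.univ.erase t).powerset) : t ∉ J :=
  fun h => Finset.notMem_erase t _ (Finset.mem_powerset.mp hJ h)

end

theorem stmt16_general {Λ X : Type*} [DecidableEq Λ] [Fintype Λ] [Fintype X]
    (nbhd : Λ → Finset Λ)
    (Φ : Finset Λ → (Λ → X) → ℝ)
    (hloc : ∀ V : Finset Λ, ∀ x y : Λ → X, (∀ s ∈ V, x s = y s) → Φ V x = Φ V y)
    (hpair : ∀ t : Λ, ∀ V : Finset Λ, t ∉ V → ¬ V ⊆ nbhd t →
      ∀ x : Λ → X, Φ (insert t V) x = 0)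
    (Δ : ∀ t : Λ, ({s : Λ // s ≠ t} → X) → X → X → ℝ)
    (hΔ : ∀ t z x u, Δ t z x u
      = (∑ J ∈ (Finset.univ.erase t).powerset.filter (fun J : Finset Λ => J ≠ ∅),
          (Φ (insert t J) (cat t u z) - Φ (insert t J) (cat t x z)))
        + Φ {t} (cat t u z) - Φ {t} (cat t x z)) :
    (∀ t : Λ, ∀ x u : X, ∀ z z' : {s : Λ // s ≠ t} → X,
        (∀ s : {s : Λ // s ≠ t}, s.1 ∈ nbhd t → z s = z' s) → Δ t z x u = Δ t z' x u) ∧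
    (∀ P : (Λ → X) → ℝ, (∀ σ, 0 < P σ) → ∑ σ, P σ = 1 →
      (∀ t : Λ, ∀ z : {s : Λ // s ≠ t} → X, ∀ x : X,
        P (cat t x z) / ∑ v : X, P (cat t v z)
          = Real.exp (-(∑ J ∈ (Finset.univ.erase t).powerset, Φ (insert t J) (cat t x z)))
            / ∑ α : X, Real.exp
                (-(∑ J ∈ (Finset.univ.erase t).powerset, Φ (insert t J) (cat t α z)))) →
      (∀ t : Λ, ∀ z z' : {s : Λ // s ≠ t} → X,
        (∀ s : {s : Λ // s ≠ t}, s.1 ∈ nbhd t → z s = z' s) →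
        ∀ x : X, P (cat t x z) / ∑ v : X, P (cat t v z)
          = P (cat t x z') / ∑ v : X, P (cat t v z'))) := by
  have key {t z z'} :=
    potential_cat_eq_of_eq_on_nbhd nbhd Φ hloc hpair (t := t) (z := z) (z' := z')
  refine ⟨fun t x u z z' hzz => ?_, fun P _ _ hgibbs t z z' hzz x => ?_⟩
  · have hsingleton : ({t} : Finset Λ) = insert t ∅ := rfl
    rw [hΔ, hΔ, hsingleton, key hzz x (Finset.notMem_empty t), key hzz u (Finset.notMem_empty t)]
    congr 2
    refine Finset.sum_congr rfl fun J hJ => ?_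
    have htJ := notMem_of_mem_powerset_erase (Finset.mem_filter.mp hJ).1
    rw [key hzz x htJ, key hzz u htJ]
  · have henergy : ∀ v : X, ∑ J ∈ (Finset.univ.erase t).powerset, Φ (insert t J) (cat t v z)
        = ∑ J ∈ (Finset.univ.erase t).powerset, Φ (insert t J) (cat t v z') := fun v =>
      Finset.sum_congr rfl fun J hJ => key hzz v (notMem_of_mem_powerset_erase hJ)
    simp only [hgibbs t z x, hgibbs t z' x, henergy]

theorem stmt16 {Λ X : Type*} [DecidableEq Λ] [Fintype Λ] [Fintype X] [Nonempty X]
    (nbhd : Λ → Finset Λ)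
    (hself : ∀ t, t ∉ nbhd t) (hsymm : ∀ t s, s ∈ nbhd t ↔ t ∈ nbhd s)
    (Φ : Finset Λ → (Λ → X) → ℝ)
    (hloc : ∀ V : Finset Λ, ∀ x y : Λ → X, (∀ s ∈ V, x s = y s) → Φ V x = Φ V y)
    (hpair : ∀ t : Λ, ∀ V : Finset Λ, t ∉ V → ¬ V ⊆ nbhd t →
      ∀ x : Λ → X, Φ (insert t V) x = 0)
    (Δ : ∀ t : Λ, ({s : Λ // s ≠ t} → X) → X → X → ℝ)
    (hΔ : ∀ t z x u, Δ t z x u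
      = (∑ J ∈ (Finset.univ.erase t).powerset.filter (fun J : Finset Λ => J ≠ ∅),
          (Φ (insert t J) (cat t u z) - Φ (insert t J) (cat t x z)))
        + Φ {t} (cat t u z) - Φ {t} (cat t x z)) :
    (∀ t : Λ, ∀ x u : X, ∀ z z' : {s : Λ // s ≠ t} → X,
        (∀ s : {s : Λ // s ≠ t}, s.1 ∈ nbhd t → z s = z' s) → Δ t z x u = Δ t z' x u) ∧
    (∀ P : (Λ → X) → ℝ, (∀ σ, 0 < P σ) → ∑ σ, P σ = 1 →
      (∀ t : Λ, ∀ z : {s : Λ // s ≠ t} → X, ∀ x : X,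
        P (cat t x z) / ∑ v : X, P (cat t v z)
          = Real.exp (-(∑ J ∈ (Finset.univ.erase t).powerset, Φ (insert t J) (cat t x z)))
            / ∑ α : X, Real.exp
                (-(∑ J ∈ (Finset.univ.erase t).powerset, Φ (insert t J) (cat t α z)))) →
      (∀ t : Λ, ∀ z z' : {s : Λ // s ≠ t} → X,
        (∀ s : {s : Λ // s ≠ t}, s.1 ∈ nbhd t → z s = z' s) →
        ∀ x : X, P (cat t x z) / ∑ v : X, P (cat t v z)
          = P (cat t x z') / ∑ v : X, P (cat t v z'))) :=
  stmt16_general nbhd Φ hloc hpair Δ hΔ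
end
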